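/- arXiv:2512.19034 — 2 statements merged into one kernel-verified Lean document; each statement's English description precedes it below -/
import Mathlib

section
/- For every involution z in the symmetric group S_{n+1}, the permutation [[Cyc(z)]]_des, formed by listing the pairs (a₁,b₁),…,(a_m,b_m) of Cyc(z) in increasing order of b's, concatenating b₁a₁b₂a₂⋯b_ma_m, and deduplicating (keeping only first occurrences left to right), is an element of A^A(z), i.e., a minimal-length permutation w ∈ S_{n+1} with w ∘ w⁻¹ = z under the Demazure product. -/
/-- The adjacent transposition `t_i = (i, i+1)`, as a permutation of `ℤ`. -/
def tA (i : ℤ) : Equiv.Perm ℤ := Equiv.swap i (i + 1)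

/-- The symmetric group `S_{n+1}`, realized as the permutations of `ℤ` that fix
everything outside `{1, …, n+1}`. -/
def Sgrp (n : ℕ) : Set (Equiv.Perm ℤ) :=
  {w | ∀ i : ℤ, (i < 1 ∨ (n : ℤ) + 1 < i) → w i = i}

/-- Coxeter length on `S_{n+1}`. -/
noncomputable def lenA (n : ℕ) (w : Equiv.Perm ℤ) : ℕ :=
  sInf {m | ∃ l : List ℤ, (∀ i ∈ l, 1 ≤ i ∧ i ≤ (n : ℤ)) ∧
    (l.map tA).prod = w ∧ l.length = m}

/-- Deduplicate a word, keeping only the first occurrence of each letter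
(left to right). -/
def dedupFirst : List ℤ → List ℤ
  | [] => []
  | a :: l => a :: (dedupFirst l).filter (fun x => x != a)

/-- The word `b₁a₁b₂a₂⋯b_ma_m` obtained by listing the pairs
`(a,b) ∈ Cyc(z) = {(a,b) : a ≤ b = z(a)}` in increasing order of the `b`'s and
concatenating `b, a` for each pair (here `a = z(b)`). -/
noncomputable def cycWordDes (n : ℕ) (z : Equiv.Perm ℤ) : List ℤ :=
  (((Finset.Icc (1 : ℤ) ((n : ℤ) + 1)).filter (fun b => z b ≤ b)).sort (· ≤ ·)).foldr
    (fun b acc => b :: z b :: acc) []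

/-!
`lenA` is the number of inversions, so `s_j` is a right ascent of `w` iff `w j < w (j + 1)`.
If `v = s_j u` with `ℓ(v) = ℓ(u) + 1`, then `v ∘ v⁻¹ = s_j ∘ (u ∘ u⁻¹) ∘ s_j`. For an involution
`y`, the product `s_j ∘ y ∘ s_j` is `y` when `y (j + 1) < y j`, and otherwise it is `s_j ⋉ y`
(`y s_j` if `y` fixes `j` and `j + 1`, `s_j y s_j` if not), which has a descent at `j` and
`atomWeight` larger by exactly `4`. Hence `atomWeight (v ∘ v⁻¹) ≤ 4 ℓ(v)`, and every left
descent of `v` is a descent of `v ∘ v⁻¹`.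

Conversely every involution `z ≠ 1` is `s_j ⋉ y` for an involution `y` with `y j < y (j + 1)`,
taking for `j` the largest index with `j < z j`; then `[[Cyc(z)]]_des` is `[[Cyc(y)]]_des` with
`s_j` applied to every letter. Induction on `atomWeight` gives `w = s_j w'` with `w ∘ w⁻¹ = z`,
`4 ℓ(w) = atomWeight z` and one-line notation `[[Cyc(z)]]_des`, and the bound above makes it
minimal.
-/

open Equiv Finset

lemma tA_apply (j x : ℤ) : tA j x = if x = j then j + 1 else if x = j + 1 then j else x :=
  swap_apply_def _ _ _

@[simp] lemma tA_apply_left (j : ℤ) : tA j j = j + 1 := swap_apply_left _ _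

@[simp] lemma tA_apply_right (j : ℤ) : tA j (j + 1) = j := swap_apply_right _ _

lemma tA_apply_of_ne_of_ne {j x : ℤ} (h₁ : x ≠ j) (h₂ : x ≠ j + 1) : tA j x = x :=
  swap_apply_of_ne_of_ne h₁ h₂

@[simp] lemma tA_tA (j x : ℤ) : tA j (tA j x) = x := swap_apply_self _ _ _

@[simp] lemma tA_mul_tA (j : ℤ) : tA j * tA j = 1 := swap_mul_self _ _

@[simp] lemma tA_inv (j : ℤ) : (tA j)⁻¹ = tA j := swap_inv _ _

lemma tA_lt_tA {j a b : ℤ} (hab : a < b) (hj : ¬(a = j ∧ b = j + 1)) : tA j a < tA j b := by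
  rw [tA_apply, tA_apply]; split_ifs <;> omega

lemma tA_le_tA_iff {j a b : ℤ} (h : ¬(a = j ∧ b = j + 1)) (h' : ¬(a = j + 1 ∧ b = j)) :
    tA j a ≤ tA j b ↔ a ≤ b := by
  rw [tA_apply, tA_apply]; split_ifs <;> omega

lemma apply_apply_of_inv_eq {z : Perm ℤ} (hzi : z⁻¹ = z) (x : ℤ) : z (z x) = x := by
  conv_lhs => arg 1; rw [← hzi]
  simp

lemma tA_mul_comm_of_eq_swap {j : ℤ} {z : Perm ℤ} (h : tA j = swap (z j) (z (j + 1))) :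
    tA j * z = z * tA j :=
  eq_mul_inv_iff_mul_eq.mp (h.trans (swap_apply_apply z j (j + 1)))

namespace Sgrp

variable {n : ℕ} {u v : Perm ℤ}

lemma one_mem : (1 : Perm ℤ) ∈ Sgrp n := fun _ _ => rfl

lemma mul_mem (hu : u ∈ Sgrp n) (hv : v ∈ Sgrp n) : u * v ∈ Sgrp n := fun i hi => by
  rw [Perm.mul_apply, hv i hi, hu i hi]

lemma inv_mem (hu : u ∈ Sgrp n) : u⁻¹ ∈ Sgrp n := fun i hi => by
  rw [Perm.inv_eq_iff_eq, hu i hi]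

lemma tA_mem {j : ℤ} (h₁ : 1 ≤ j) (h₂ : j ≤ n) : tA j ∈ Sgrp n := fun _ _ =>
  tA_apply_of_ne_of_ne (by omega) (by omega)

lemma apply_mem_Icc (hu : u ∈ Sgrp n) {i : ℤ} (hi : i ∈ Icc 1 ((n : ℤ) + 1)) :
    u i ∈ Icc 1 ((n : ℤ) + 1) := by
  rw [mem_Icc] at hi ⊢
  by_contra h
  have := u.injective (hu (u i) (by omega))
  omega

lemma mem_Icc_of_apply_ne (hu : u ∈ Sgrp n) {i : ℤ} (hi : u i ≠ i) :
    i ∈ Icc 1 ((n : ℤ) + 1) := by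
  rw [mem_Icc]
  by_contra h
  exact hi (hu i (by omega))

end Sgrp

noncomputable def inversions (n : ℕ) (w : Perm ℤ) : Finset (ℤ × ℤ) :=
  (Icc 1 ((n : ℤ) + 1) ×ˢ Icc 1 ((n : ℤ) + 1)).filter (fun p => p.1 < p.2 ∧ w p.2 < w p.1)

noncomputable def invCount (n : ℕ) (w : Perm ℤ) : ℕ := (inversions n w).card

lemma mem_inversions {n : ℕ} {w : Perm ℤ} {p : ℤ × ℤ} :
    p ∈ inversions n w ↔
      (p.1 ∈ Icc 1 ((n : ℤ) + 1) ∧ p.2 ∈ Icc 1 ((n : ℤ) + 1)) ∧ p.1 < p.2 ∧ w p.2 < w p.1 := by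
  rw [inversions, mem_filter, mem_product]

@[simp] lemma invCount_one (n : ℕ) : invCount n 1 = 0 := by
  simp only [invCount, card_eq_zero, eq_empty_iff_forall_notMem, mem_inversions,
    Perm.one_apply]
  omega

section invCount

variable {n : ℕ} {w : Perm ℤ} {j : ℤ}

lemma invCount_mul_tA_of_lt (h₁ : 1 ≤ j) (h₂ : j ≤ n) (hw : w j < w (j + 1)) :
    invCount n (w * tA j) = invCount n w + 1 := by
  have hmem : (j, j + 1) ∈ inversions n (w * tA j) := by
    simp only [mem_inversions, mem_Icc, Perm.mul_apply, tA_apply_left, tA_apply_right]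
    omega
  have hs : ∀ i ∈ Icc 1 ((n : ℤ) + 1), tA j i ∈ Icc 1 ((n : ℤ) + 1) := fun _ =>
    Sgrp.apply_mem_Icc (Sgrp.tA_mem h₁ h₂)
  have hcard : ((inversions n (w * tA j)).erase (j, j + 1)).card = invCount n w := by
    refine card_nbij' (fun p => (tA j p.1, tA j p.2)) (fun p => (tA j p.1, tA j p.2))
      ?_ ?_ (fun p _ => by simp) (fun p _ => by simp)
    · rintro ⟨p, q⟩ hpq
      simp only [coe_erase, Set.mem_sdiff, mem_coe, mem_inversions, Set.mem_singleton_iff,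
        Prod.mk.injEq, Perm.mul_apply] at hpq ⊢
      obtain ⟨⟨⟨hp, hq⟩, hlt, hinv⟩, hne⟩ := hpq
      exact ⟨⟨hs _ hp, hs _ hq⟩, tA_lt_tA hlt hne, hinv⟩
    · rintro ⟨p, q⟩ hpq
      simp only [coe_erase, Set.mem_sdiff, mem_coe, mem_inversions, Set.mem_singleton_iff,
        Prod.mk.injEq, Perm.mul_apply, tA_tA] at hpq ⊢
      obtain ⟨⟨hp, hq⟩, hlt, hinv⟩ := hpq
      have hpq : ¬(p = j ∧ q = j + 1) := by rintro ⟨rfl, rfl⟩; omega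
      refine ⟨⟨⟨hs _ hp, hs _ hq⟩, tA_lt_tA hlt hpq, hinv⟩, ?_⟩
      rw [tA_apply, tA_apply]
      split_ifs <;> omega
  rw [← hcard, card_erase_of_mem hmem, invCount, Nat.sub_add_cancel (card_pos.mpr ⟨_, hmem⟩)]

lemma invCount_mul_tA_of_gt (h₁ : 1 ≤ j) (h₂ : j ≤ n) (hw : w (j + 1) < w j) :
    invCount n (w * tA j) + 1 = invCount n w := by
  have := invCount_mul_tA_of_lt (w := w * tA j) h₁ h₂ (by simpa using hw)
  rwa [mul_assoc, tA_mul_tA, mul_one, eq_comm] at this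

lemma invCount_inv (hw : w ∈ Sgrp n) : invCount n w⁻¹ = invCount n w := by
  refine card_nbij' (fun p => (w⁻¹ p.2, w⁻¹ p.1)) (fun p => (w p.2, w p.1))
    ?_ ?_ (fun p _ => by simp) (fun p _ => by simp)
  · rintro ⟨p, q⟩ hpq
    simp only [mem_coe, mem_inversions, Perm.coe_inv, apply_symm_apply] at hpq ⊢
    obtain ⟨⟨hp, hq⟩, hlt, hinv⟩ := hpq
    exact ⟨⟨Sgrp.apply_mem_Icc (Sgrp.inv_mem hw) hq, Sgrp.apply_mem_Icc (Sgrp.inv_mem hw) hp⟩,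
      hinv, hlt⟩
  · rintro ⟨p, q⟩ hpq
    simp only [mem_coe, mem_inversions, Perm.coe_inv, symm_apply_apply] at hpq ⊢
    obtain ⟨⟨hp, hq⟩, hlt, hinv⟩ := hpq
    exact ⟨⟨Sgrp.apply_mem_Icc hw hq, Sgrp.apply_mem_Icc hw hp⟩, hinv, hlt⟩

lemma invCount_tA_mul_of_lt (hw : w ∈ Sgrp n) (h₁ : 1 ≤ j) (h₂ : j ≤ n)
    (hlt : w⁻¹ j < w⁻¹ (j + 1)) : invCount n (tA j * w) = invCount n w + 1 := by
  rw [← invCount_inv (Sgrp.mul_mem (Sgrp.tA_mem h₁ h₂) hw), mul_inv_rev, tA_inv,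
    invCount_mul_tA_of_lt h₁ h₂ hlt, invCount_inv hw]

lemma invCount_tA_mul_of_gt (hw : w ∈ Sgrp n) (h₁ : 1 ≤ j) (h₂ : j ≤ n)
    (hgt : w⁻¹ (j + 1) < w⁻¹ j) : invCount n (tA j * w) + 1 = invCount n w := by
  rw [← invCount_inv (Sgrp.mul_mem (Sgrp.tA_mem h₁ h₂) hw), mul_inv_rev, tA_inv,
    invCount_mul_tA_of_gt h₁ h₂ hgt, invCount_inv hw]

end invCount

section length

variable {n : ℕ} {w : Perm ℤ}

lemma card_Icc_one (n : ℕ) : (Icc (1 : ℤ) (n + 1)).card = n + 1 := by simp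

lemma orderEmbOfFin_Icc_one (n : ℕ) (k : Fin (n + 1)) :
    (Icc (1 : ℤ) (n + 1)).orderEmbOfFin (card_Icc_one n) k = k + 1 :=
  (congrFun (orderEmbOfFin_unique (card_Icc_one n) (f := fun k : Fin (n + 1) => (k : ℤ) + 1)
    (fun k => by simp; omega) (Fin.strictMono_iff_lt_succ.2 fun k => by simp)) k).symm

lemma eq_one_of_forall_lt_apply_succ (hw : w ∈ Sgrp n)
    (hasc : ∀ j : ℤ, 1 ≤ j → j ≤ n → w j < w (j + 1)) : w = 1 := by
  ext i
  by_cases hi : 1 ≤ i ∧ i ≤ (n : ℤ) + 1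
  · have := congrFun (orderEmbOfFin_unique (card_Icc_one n) (f := fun k => w ((k : ℤ) + 1))
      (fun k => Sgrp.apply_mem_Icc hw (by simp; omega))
      (Fin.strictMono_iff_lt_succ.2 fun k => by
        simpa [add_assoc] using hasc (k + 1) (by omega) (by omega))) ⟨(i - 1).toNat, by omega⟩
    rwa [orderEmbOfFin_Icc_one, Fin.val_mk, Int.toNat_sub_of_le hi.1, sub_add_cancel] at this
  · exact hw i (by omega)

lemma exists_descent (hw : w ∈ Sgrp n) (hne : w ≠ 1) :
    ∃ j : ℤ, 1 ≤ j ∧ j ≤ n ∧ w (j + 1) < w j := by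
  by_contra! h
  refine hne (eq_one_of_forall_lt_apply_succ hw fun j h₁ h₂ => ?_)
  have := w.injective.ne (show j ≠ j + 1 by omega)
  have := h j h₁ h₂
  omega

lemma exists_word_length_eq_invCount (hw : w ∈ Sgrp n) :
    ∃ l : List ℤ, (∀ i ∈ l, 1 ≤ i ∧ i ≤ (n : ℤ)) ∧ (l.map tA).prod = w ∧
      l.length = invCount n w := by
  induction h : invCount n w using Nat.strong_induction_on generalizing w with
  | _ k ih =>
    rcases eq_or_ne w 1 with rfl | hne
    · exact ⟨[], by simp, by simp, by simp [← h]⟩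
    obtain ⟨j, h₁, h₂, hdesc⟩ := exists_descent hw hne
    have hcount := invCount_mul_tA_of_gt h₁ h₂ hdesc
    obtain ⟨l, hl, hprod, hlen⟩ :=
      ih _ (by omega) (Sgrp.mul_mem hw (Sgrp.tA_mem h₁ h₂)) rfl
    refine ⟨l ++ [j], ?_, ?_, ?_⟩
    · intro i hi
      rcases List.mem_append.mp hi with hi | hi
      · exact hl i hi
      · rw [List.mem_singleton.mp hi]; exact ⟨h₁, h₂⟩
    · simp [hprod, mul_assoc]
    · simp [hlen]; omega

lemma invCount_prod_le_length (l : List ℤ) (hl : ∀ i ∈ l, 1 ≤ i ∧ i ≤ (n : ℤ)) :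
    invCount n (l.map tA).prod ≤ l.length := by
  induction l using List.reverseRecOn with
  | nil => simp
  | append_singleton l j ih =>
    have ih := ih fun i hi => hl i (by simp [hi])
    obtain ⟨h₁, h₂⟩ := hl j (by simp)
    simp only [List.map_append, List.map_singleton, List.prod_append, List.prod_singleton,
      List.length_append, List.length_singleton]
    have := ((l.map tA).prod).injective.ne (show j ≠ j + 1 by omega)
    rcases lt_or_gt_of_ne this with hlt | hgt
    · rw [invCount_mul_tA_of_lt h₁ h₂ hlt]; omega
    · have := invCount_mul_tA_of_gt h₁ h₂ hgt; omega

lemma lenA_eq_invCount (hw : w ∈ Sgrp n) : lenA n w = invCount n w := by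
  obtain ⟨l, hl, hprod, hlen⟩ := exists_word_length_eq_invCount hw
  refine le_antisymm (Nat.sInf_le ⟨l, hl, hprod, hlen⟩) (le_csInf ⟨_, l, hl, hprod, hlen⟩ ?_)
  rintro m ⟨l', hl', rfl, rfl⟩
  exact invCount_prod_le_length l' hl'

lemma lenA_mul_tA_eq_succ_iff (hw : w ∈ Sgrp n) {j : ℤ} (h₁ : 1 ≤ j) (h₂ : j ≤ n) :
    lenA n (w * tA j) = lenA n w + 1 ↔ w j < w (j + 1) := by
  rw [lenA_eq_invCount (Sgrp.mul_mem hw (Sgrp.tA_mem h₁ h₂)), lenA_eq_invCount hw]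
  refine ⟨fun h => ?_, invCount_mul_tA_of_lt h₁ h₂⟩
  by_contra hge
  have := w.injective.ne (show j + 1 ≠ j by omega)
  have := invCount_mul_tA_of_gt (w := w) h₁ h₂ (by omega)
  omega

lemma lenA_tA_mul_eq_succ_iff (hw : w ∈ Sgrp n) {j : ℤ} (h₁ : 1 ≤ j) (h₂ : j ≤ n) :
    lenA n (tA j * w) = lenA n w + 1 ↔ w⁻¹ j < w⁻¹ (j + 1) := by
  rw [lenA_eq_invCount (Sgrp.mul_mem (Sgrp.tA_mem h₁ h₂) hw), lenA_eq_invCount hw]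
  refine ⟨fun h => ?_, invCount_tA_mul_of_lt hw h₁ h₂⟩
  by_contra hge
  have := w⁻¹.injective.ne (show j + 1 ≠ j by omega)
  have := invCount_tA_mul_of_gt hw h₁ h₂ (by omega)
  omega

lemma exists_eq_tA_mul_of_inv_lt (hw : w ∈ Sgrp n) {j : ℤ} (h₁ : 1 ≤ j) (h₂ : j ≤ n)
    (hdesc : w⁻¹ (j + 1) < w⁻¹ j) : ∃ u ∈ Sgrp n, w = tA j * u ∧ u⁻¹ j < u⁻¹ (j + 1) :=
  ⟨tA j * w, Sgrp.mul_mem (Sgrp.tA_mem h₁ h₂) hw, by simp [← mul_assoc], by simpa using hdesc⟩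

end length

noncomputable def movedCount (n : ℕ) (w : Perm ℤ) : ℕ :=
  ((Icc 1 ((n : ℤ) + 1)).filter (fun i => w i ≠ i)).card

/-- Four times the common length `(ℓ(z) + κ(z)) / 2` of the minimal `w` with `w ∘ w⁻¹ = z`,
where `κ(z)` is the number of 2-cycles of `z`. -/
noncomputable def atomWeight (n : ℕ) (z : Perm ℤ) : ℕ := 2 * invCount n z + movedCount n z

@[simp] lemma atomWeight_one (n : ℕ) : atomWeight n 1 = 0 := by
  simp [atomWeight, movedCount]

/-- `s_j ⋉ y`: the value of `s_j ∘ y ∘ s_j` for an involution `y` with `y j < y (j + 1)`. -/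
def twistedConj (j : ℤ) (y : Perm ℤ) : Perm ℤ :=
  if y j = j ∧ y (j + 1) = j + 1 then y * tA j else tA j * y * tA j

section twistedConj

variable {n : ℕ} {y : Perm ℤ} {j : ℤ}

lemma movedCount_mul_tA (h₁ : 1 ≤ j) (h₂ : j ≤ n) (hj : y j = j) (hj' : y (j + 1) = j + 1) :
    movedCount n (y * tA j) = movedCount n y + 2 := by
  have : (Icc 1 ((n : ℤ) + 1)).filter (fun i => (y * tA j) i ≠ i) =
      insert j (insert (j + 1) ((Icc 1 ((n : ℤ) + 1)).filter (fun i => y i ≠ i))) := by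
    ext i
    rw [mem_filter, mem_insert, mem_insert, mem_filter, mem_Icc, Perm.mul_apply]
    rcases eq_or_ne i j with rfl | hi
    · simp [hj']; omega
    rcases eq_or_ne i (j + 1) with rfl | hi'
    · simp [hj]; omega
    · simp [tA_apply_of_ne_of_ne hi hi', hi, hi']
  rw [movedCount, this, card_insert_of_notMem (by simp [hj]),
    card_insert_of_notMem (by simp [hj'])]
  rfl

lemma movedCount_tA_mul_mul_tA (h₁ : 1 ≤ j) (h₂ : j ≤ n) :
    movedCount n (tA j * y * tA j) = movedCount n y := by
  refine card_nbij' (tA j) (tA j) (fun i hi => ?_) (fun i hi => ?_)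
    (fun i _ => tA_tA j i) (fun i _ => tA_tA j i)
  all_goals
    rw [mem_coe, mem_filter] at hi ⊢
    simp only [Perm.mul_apply] at hi ⊢
    refine ⟨Sgrp.apply_mem_Icc (Sgrp.tA_mem h₁ h₂) hi.1, fun h => hi.2 ?_⟩
    simpa using congrArg (tA j) h

lemma twistedConj_mem (hy : y ∈ Sgrp n) (h₁ : 1 ≤ j) (h₂ : j ≤ n) : twistedConj j y ∈ Sgrp n := by
  have hs := Sgrp.tA_mem h₁ h₂
  unfold twistedConj
  split_ifs
  exacts [Sgrp.mul_mem hy hs, Sgrp.mul_mem (Sgrp.mul_mem hs hy) hs]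

lemma twistedConj_inv (hyi : y⁻¹ = y) : (twistedConj j y)⁻¹ = twistedConj j y := by
  unfold twistedConj
  split_ifs with h
  · rw [mul_inv_rev, tA_inv, hyi, tA_mul_comm_of_eq_swap (by rw [h.1, h.2]; rfl)]
  · rw [mul_inv_rev, mul_inv_rev, tA_inv, hyi, mul_assoc]

lemma twistedConj_apply_succ_lt (hlt : y j < y (j + 1)) :
    twistedConj j y (j + 1) < twistedConj j y j := by
  unfold twistedConj
  split_ifs with h
  · simp [h.1, h.2]
  · simpa using tA_lt_tA hlt h

lemma atomWeight_twistedConj (hy : y ∈ Sgrp n) (hyi : y⁻¹ = y) (h₁ : 1 ≤ j) (h₂ : j ≤ n)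
    (hlt : y j < y (j + 1)) : atomWeight n (twistedConj j y) = atomWeight n y + 4 := by
  have hys := invCount_mul_tA_of_lt h₁ h₂ hlt
  unfold twistedConj atomWeight
  split_ifs with h
  · rw [hys, movedCount_mul_tA h₁ h₂ h.1 h.2]; ring
  · have hsys : invCount n (tA j * (y * tA j)) = invCount n (y * tA j) + 1 := by
      refine invCount_tA_mul_of_lt (Sgrp.mul_mem hy (Sgrp.tA_mem h₁ h₂)) h₁ h₂ ?_
      simpa [mul_inv_rev, hyi] using tA_lt_tA hlt h
    rw [← mul_assoc] at hsys
    rw [hsys, hys, movedCount_tA_mul_mul_tA h₁ h₂]; ring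

end twistedConj

structure IsDemazure (n : ℕ) (dem : Perm ℤ → Perm ℤ → Perm ℤ) : Prop where
  assoc : ∀ u v w, dem (dem u v) w = dem u (dem v w)
  one : ∀ w, dem w 1 = w ∧ dem 1 w = w
  mul_tA : ∀ w ∈ Sgrp n, ∀ j : ℤ, 1 ≤ j → j ≤ (n : ℤ) →
    dem w (tA j) = if lenA n (w * tA j) = lenA n w + 1 then w * tA j else w
  tA_mul : ∀ w ∈ Sgrp n, ∀ j : ℤ, 1 ≤ j → j ≤ (n : ℤ) →
    dem (tA j) w = if lenA n (tA j * w) = lenA n w + 1 then tA j * w else w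

namespace IsDemazure

variable {n : ℕ} {dem : Perm ℤ → Perm ℤ → Perm ℤ} {j : ℤ}

lemma dem_tA_right (hd : IsDemazure n dem) {w : Perm ℤ} (hw : w ∈ Sgrp n) (h₁ : 1 ≤ j)
    (h₂ : j ≤ n) : dem w (tA j) = if w j < w (j + 1) then w * tA j else w := by
  simp only [hd.mul_tA w hw j h₁ h₂, lenA_mul_tA_eq_succ_iff hw h₁ h₂]

lemma dem_tA_left (hd : IsDemazure n dem) {w : Perm ℤ} (hw : w ∈ Sgrp n) (h₁ : 1 ≤ j)
    (h₂ : j ≤ n) : dem (tA j) w = if w⁻¹ j < w⁻¹ (j + 1) then tA j * w else w := by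
  simp only [hd.tA_mul w hw j h₁ h₂, lenA_tA_mul_eq_succ_iff hw h₁ h₂]

lemma dem_tA_mul_inv (hd : IsDemazure n dem) {u : Perm ℤ} (hu : u ∈ Sgrp n) (h₁ : 1 ≤ j)
    (h₂ : j ≤ n) (hasc : u⁻¹ j < u⁻¹ (j + 1)) :
    dem (tA j * u) (tA j * u)⁻¹ = dem (tA j) (dem (dem u u⁻¹) (tA j)) := by
  have hl : dem (tA j) u = tA j * u := by rw [hd.dem_tA_left hu h₁ h₂, if_pos hasc]
  have hr : dem u⁻¹ (tA j) = u⁻¹ * tA j := by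
    rw [hd.dem_tA_right (Sgrp.inv_mem hu) h₁ h₂, if_pos hasc]
  rw [mul_inv_rev, tA_inv, ← hl, ← hr, hd.assoc, hd.assoc]

variable {y : Perm ℤ}

lemma dem_tA_dem_tA_of_lt (hd : IsDemazure n dem) (hy : y ∈ Sgrp n) (hyi : y⁻¹ = y)
    (h₁ : 1 ≤ j) (h₂ : j ≤ n) (hlt : y j < y (j + 1)) :
    dem (tA j) (dem y (tA j)) = twistedConj j y := by
  have hys := Sgrp.mul_mem hy (Sgrp.tA_mem h₁ h₂)
  rw [hd.dem_tA_right hy h₁ h₂, if_pos hlt, hd.dem_tA_left hys h₁ h₂, twistedConj]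
  by_cases hfix : y j = j ∧ y (j + 1) = j + 1
  · rw [if_pos hfix, if_neg (by simp [hyi, hfix.1, hfix.2])]
  · rw [if_neg hfix, if_pos (by simpa [hyi] using tA_lt_tA hlt hfix), mul_assoc]

lemma dem_tA_dem_tA_of_gt (hd : IsDemazure n dem) (hy : y ∈ Sgrp n) (hyi : y⁻¹ = y)
    (h₁ : 1 ≤ j) (h₂ : j ≤ n) (hgt : y (j + 1) < y j) :
    dem (tA j) (dem y (tA j)) = y := by
  rw [hd.dem_tA_right hy h₁ h₂, if_neg (by omega), hd.dem_tA_left hy h₁ h₂, if_neg (by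
    rw [hyi]; omega)]

lemma dem_tA_dem_tA_spec (hd : IsDemazure n dem) (hy : y ∈ Sgrp n) (hyi : y⁻¹ = y)
    (h₁ : 1 ≤ j) (h₂ : j ≤ n) :
    dem (tA j) (dem y (tA j)) ∈ Sgrp n ∧
      (dem (tA j) (dem y (tA j)))⁻¹ = dem (tA j) (dem y (tA j)) ∧
      atomWeight n (dem (tA j) (dem y (tA j))) ≤ atomWeight n y + 4 ∧
      dem (tA j) (dem y (tA j)) (j + 1) < dem (tA j) (dem y (tA j)) j := by
  rcases lt_or_gt_of_ne (y.injective.ne (show j ≠ j + 1 by omega)) with hlt | hgt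
  · rw [hd.dem_tA_dem_tA_of_lt hy hyi h₁ h₂ hlt]
    exact ⟨twistedConj_mem hy h₁ h₂, twistedConj_inv hyi,
      (atomWeight_twistedConj hy hyi h₁ h₂ hlt).le, twistedConj_apply_succ_lt hlt⟩
  · rw [hd.dem_tA_dem_tA_of_gt hy hyi h₁ h₂ hgt]
    exact ⟨hy, hyi, by omega, hgt⟩

lemma dem_self_inv_spec (hd : IsDemazure n dem) {v : Perm ℤ} (hv : v ∈ Sgrp n) :
    dem v v⁻¹ ∈ Sgrp n ∧ (dem v v⁻¹)⁻¹ = dem v v⁻¹ ∧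
      atomWeight n (dem v v⁻¹) ≤ 4 * invCount n v := by
  induction h : invCount n v using Nat.strong_induction_on generalizing v with
  | _ k ih =>
    rcases eq_or_ne v 1 with rfl | hne
    · simp [(hd.one 1).1, Sgrp.one_mem]
    obtain ⟨j, h₁, h₂, hdesc⟩ := exists_descent (Sgrp.inv_mem hv) (inv_ne_one.mpr hne)
    obtain ⟨u, hu, rfl, hasc⟩ := exists_eq_tA_mul_of_inv_lt hv h₁ h₂ hdesc
    have hcount := invCount_tA_mul_of_lt hu h₁ h₂ hasc
    obtain ⟨hy, hyi, hwt⟩ := ih _ (by omega) hu rfl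
    obtain ⟨hs, hsi, hswt, -⟩ := hd.dem_tA_dem_tA_spec hy hyi h₁ h₂
    rw [hd.dem_tA_mul_inv hu h₁ h₂ hasc]
    exact ⟨hs, hsi, by omega⟩

lemma dem_self_inv_apply_succ_lt (hd : IsDemazure n dem) {v : Perm ℤ} (hv : v ∈ Sgrp n)
    (h₁ : 1 ≤ j) (h₂ : j ≤ n) (hdesc : v⁻¹ (j + 1) < v⁻¹ j) :
    dem v v⁻¹ (j + 1) < dem v v⁻¹ j := by
  obtain ⟨u, hu, rfl, hasc⟩ := exists_eq_tA_mul_of_inv_lt hv h₁ h₂ hdesc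
  obtain ⟨hy, hyi, -⟩ := hd.dem_self_inv_spec hu
  rw [hd.dem_tA_mul_inv hu h₁ h₂ hasc]
  exact (hd.dem_tA_dem_tA_spec hy hyi h₁ h₂).2.2.2

end IsDemazure

lemma dedupFirst_cons (a : ℤ) (l : List ℤ) :
    dedupFirst (a :: l) = a :: (dedupFirst l).filter (fun x => x != a) := rfl

lemma dedupFirst_map {f : ℤ → ℤ} (hf : Function.Injective f) (l : List ℤ) :
    dedupFirst (l.map f) = (dedupFirst l).map f := by
  induction l with
  | nil => rfl
  | cons a l ih =>
    simp only [List.map_cons, dedupFirst_cons, ih, List.filter_map]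
    congr 2
    exact List.filter_congr fun x _ => by simp [bne, hf.eq_iff]

lemma dedupFirst_append_cons_cons (l₁ : List ℤ) (a : ℤ) (l₂ : List ℤ) :
    dedupFirst (l₁ ++ a :: a :: l₂) = dedupFirst (l₁ ++ a :: l₂) := by
  induction l₁ with
  | nil => simp [dedupFirst_cons, List.filter_filter]
  | cons b l₁ ih => rw [List.cons_append, List.cons_append, dedupFirst_cons, ih, dedupFirst_cons]

lemma dedupFirst_flatMap_pair (l : List ℤ) :
    dedupFirst (l.flatMap fun b => [b, b]) = dedupFirst l := by
  induction l with
  | nil => rfl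
  | cons a l ih =>
    rw [List.flatMap_cons, List.cons_append, List.singleton_append,
      ← List.nil_append (a :: a :: _), dedupFirst_append_cons_cons, List.nil_append,
      dedupFirst_cons, ih, dedupFirst_cons]

lemma dedupFirst_eq_self {l : List ℤ} (hl : l.Nodup) : dedupFirst l = l := by
  induction l with
  | nil => rfl
  | cons a l ih =>
    rw [dedupFirst_cons, ih hl.of_cons, List.filter_eq_self.mpr]
    intro x hx
    simpa using ne_of_mem_of_not_mem hx (List.nodup_cons.mp hl).1

lemma exists_sort_eq_append_of_succ_mem {s : Finset ℤ} {j : ℤ} (hj : j ∉ s) (hj' : j + 1 ∈ s) :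
    ∃ L₁ L₂ : List ℤ, s.sort = L₁ ++ (j + 1) :: L₂ ∧
      (insert j s).sort = L₁ ++ j :: (j + 1) :: L₂ ∧ (∀ b ∈ L₁, b < j) ∧ ∀ b ∈ L₂, j + 1 < b := by
  obtain ⟨L₁, L₂, hL⟩ := List.append_of_mem ((mem_sort (· ≤ ·)).mpr hj')
  have hsorted := (sortedLT_sort s).pairwise
  rw [hL, List.pairwise_append, List.pairwise_cons] at hsorted
  obtain ⟨hsorted₁, ⟨hL₂, hsorted₂⟩, hL₁₂⟩ := hsorted
  have hL₁ : ∀ b ∈ L₁, b < j := fun b hb => by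
    have := hL₁₂ b hb (j + 1) List.mem_cons_self
    have : b ≠ j := fun h => hj (by rw [← h, ← mem_sort (· ≤ ·), hL]; simp [hb])
    omega
  have hpw : (L₁ ++ j :: (j + 1) :: L₂).Pairwise (· < ·) := by
    refine List.pairwise_append.mpr ⟨hsorted₁, ?_, fun a ha b hb => ?_⟩
    · refine List.pairwise_cons.mpr ⟨fun b hb => ?_, List.pairwise_cons.mpr ⟨hL₂, hsorted₂⟩⟩
      rcases List.mem_cons.mp hb with rfl | hb
      · omega
      · have := hL₂ b hb; omega
    · have := hL₁ a ha
      rcases List.mem_cons.mp hb with rfl | hb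
      · omega
      · have := hL₁₂ a ha b hb; omega
  have hfin : insert j s = (L₁ ++ j :: (j + 1) :: L₂).toFinset := by
    ext x
    rw [mem_insert, ← mem_sort (· ≤ ·), hL]
    simp only [List.mem_toFinset, List.mem_append, List.mem_cons]
    tauto
  refine ⟨L₁, L₂, hL, ?_, hL₁, hL₂⟩
  rw [hfin, List.toFinset_sort _ (hpw.imp ne_of_lt)]
  exact hpw.imp le_of_lt

/-- The larger entries `b` of the pairs `(a, b) ∈ Cyc(z)`. -/
noncomputable def cycTops (n : ℕ) (z : Perm ℤ) : Finset ℤ :=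
  (Icc 1 ((n : ℤ) + 1)).filter (fun b => z b ≤ b)

lemma cycWordDes_eq (n : ℕ) (z : Perm ℤ) :
    cycWordDes n z = (cycTops n z).sort.flatMap (fun b => [b, z b]) := by
  rw [cycWordDes, cycTops]
  induction (((Icc (1 : ℤ) ((n : ℤ) + 1)).filter (fun b => z b ≤ b)).sort) <;> simp_all

lemma getD_dedupFirst_cycWordDes_one (n : ℕ) {i : ℤ} (h₁ : 1 ≤ i) (h₂ : i ≤ (n : ℤ) + 1) :
    (dedupFirst (cycWordDes n 1)).getD (i - 1).toNat 0 = i := by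
  have htops : cycTops n 1 = Icc 1 ((n : ℤ) + 1) := filter_true_of_mem fun _ _ => le_rfl
  have hk : (i - 1).toNat < (Icc (1 : ℤ) (n + 1)).sort.length := by simp; omega
  rw [cycWordDes_eq, htops]
  simp only [Perm.one_apply, dedupFirst_flatMap_pair, dedupFirst_eq_self (sort_nodup _ _),
    List.getD_eq_getElem _ _ hk]
  have := orderEmbOfFin_Icc_one n ⟨(i - 1).toNat, by simpa using hk⟩
  rw [orderEmbOfFin_apply] at this
  simp only [Fin.getElem_fin] at this
  omega

section words

variable {n : ℕ} {z : Perm ℤ} {j : ℤ}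

lemma cycTops_tA_mul_mul_tA (hzi : z⁻¹ = z) (h₁ : 1 ≤ j) (h₂ : j ≤ n) (hj : j + 1 < z j) :
    cycTops n (tA j * z * tA j) = (cycTops n z).map (tA j).toEmbedding := by
  have hs := Sgrp.tA_mem (n := n) h₁ h₂
  have hj' : z (j + 1) ≠ j := fun h => by
    have := apply_apply_of_inv_eq hzi (j + 1); rw [h] at this; omega
  ext x
  rw [mem_map_equiv, tA, symm_swap, ← tA, cycTops, cycTops, mem_filter, mem_filter,
    Perm.mul_apply, Perm.mul_apply]
  refine and_congr ⟨Sgrp.apply_mem_Icc hs, fun h => by simpa using Sgrp.apply_mem_Icc hs h⟩ ?_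
  have key := tA_le_tA_iff (j := j) (a := z (tA j x)) (b := tA j x)
    (fun ⟨h, h'⟩ => hj' (h' ▸ h)) (fun ⟨h, h'⟩ => by rw [h'] at h; omega)
  rwa [tA_tA] at key

lemma cycWordDes_tA_mul_mul_tA (hzi : z⁻¹ = z) (h₁ : 1 ≤ j) (h₂ : j ≤ n) (hj : j + 1 < z j) :
    cycWordDes n (tA j * z * tA j) = (cycWordDes n z).map (tA j) := by
  have hmono : StrictMonoOn (tA j).toEmbedding (cycTops n z) := fun a ha b _ hab => by
    refine tA_lt_tA hab ?_
    rintro ⟨rfl, -⟩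
    simp [cycTops] at ha
    omega
  rw [cycWordDes_eq, cycWordDes_eq, cycTops_tA_mul_mul_tA hzi h₁ h₂ hj, ← hmono.map_finsetSort,
    List.flatMap_map, List.map_flatMap]
  exact List.flatMap_congr fun b _ => by simp

lemma cycTops_mul_tA (h₁ : 1 ≤ j) (h₂ : j ≤ n) (hj : z j = j + 1) (hj' : z (j + 1) = j) :
    cycTops n (z * tA j) = insert j (cycTops n z) := by
  ext x
  rw [cycTops, cycTops, mem_insert, mem_filter, mem_filter, mem_Icc, Perm.mul_apply]
  rcases eq_or_ne x j with rfl | hx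
  · simp [hj']; omega
  rcases eq_or_ne x (j + 1) with rfl | hx'
  · simp [hj, hj']
  · simp [tA_apply_of_ne_of_ne hx hx', hx]

lemma dedupFirst_cycWordDes_of_apply_eq_succ (hzi : z⁻¹ = z) (h₁ : 1 ≤ j) (h₂ : j ≤ n)
    (hj : z j = j + 1) :
    dedupFirst (cycWordDes n z) = (dedupFirst (cycWordDes n (z * tA j))).map (tA j) := by
  have hj' : z (j + 1) = j := by rw [← hj, apply_apply_of_inv_eq hzi]
  obtain ⟨L₁, L₂, hL, hL', hL₁, hL₂⟩ := exists_sort_eq_append_of_succ_mem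
    (show j ∉ cycTops n z by simp [cycTops, hj])
    (show j + 1 ∈ cycTops n z by simp [cycTops, hj']; omega)
  have hpair : ∀ b ∈ L₁ ++ L₂, [b, (z * tA j) b].map (tA j) = [b, z b] := by
    intro b hb
    have hb' : b ≠ j ∧ b ≠ j + 1 := by
      rcases List.mem_append.mp hb with h | h
      · have := hL₁ b h; omega
      · have := hL₂ b h; omega
    have hzb : z b ≠ j ∧ z b ≠ j + 1 :=
      ⟨fun h => hb'.2 (by rw [← apply_apply_of_inv_eq hzi b, h, hj]),
        fun h => hb'.1 (by rw [← apply_apply_of_inv_eq hzi b, h, hj'])⟩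
    simp [tA_apply_of_ne_of_ne hb'.1 hb'.2, tA_apply_of_ne_of_ne hzb.1 hzb.2]
  have e₁ := List.flatMap_congr fun b hb => hpair b (List.mem_append_left L₂ hb)
  have e₂ := List.flatMap_congr fun b hb => hpair b (List.mem_append_right L₁ hb)
  rw [← dedupFirst_map (tA j).injective, cycWordDes_eq, cycWordDes_eq,
    cycTops_mul_tA h₁ h₂ hj hj', hL', hL, List.map_flatMap, List.flatMap_append,
    List.flatMap_append, List.flatMap_cons, List.flatMap_cons, List.flatMap_cons, e₁, e₂]
  simp only [List.map_cons, List.map_nil, Perm.mul_apply, tA_apply_left, tA_apply_right, hj,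
    hj', List.cons_append, List.nil_append]
  rw [dedupFirst_append_cons_cons, ← List.singleton_append (l := j :: j :: _),
    ← List.append_assoc, dedupFirst_append_cons_cons, List.append_assoc, List.singleton_append]

end words

section involutions

variable {n : ℕ} {z : Perm ℤ}

lemma exists_lt_apply_and_apply_succ_le (hz : z ∈ Sgrp n) (hzi : z⁻¹ = z) (hne : z ≠ 1) :
    ∃ j : ℤ, 1 ≤ j ∧ j ≤ n ∧ j < z j ∧ z (j + 1) ≤ j + 1 := by
  set M := (Icc 1 ((n : ℤ) + 1)).filter (fun i => i < z i)
  have hM : M.Nonempty := by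
    obtain ⟨x, hx⟩ : ∃ x, z x ≠ x := by by_contra! h; exact hne (Equiv.ext h)
    rcases lt_or_gt_of_ne hx with hlt | hgt
    · refine ⟨z x, mem_filter.mpr ⟨Sgrp.mem_Icc_of_apply_ne hz ?_, ?_⟩⟩ <;>
        rw [apply_apply_of_inv_eq hzi] <;> omega
    · exact ⟨x, mem_filter.mpr ⟨Sgrp.mem_Icc_of_apply_ne hz hx, hgt⟩⟩
  obtain ⟨hjIcc, hj⟩ := mem_filter.mp (M.max'_mem hM)
  have hzj := mem_Icc.mp (Sgrp.apply_mem_Icc hz hjIcc)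
  rw [mem_Icc] at hjIcc
  refine ⟨M.max' hM, hjIcc.1, by omega, hj, not_lt.mp fun h => ?_⟩
  have := M.le_max' _ (mem_filter.mpr ⟨mem_Icc.mpr ⟨by omega, by omega⟩, h⟩)
  omega

lemma exists_eq_twistedConj (hz : z ∈ Sgrp n) (hzi : z⁻¹ = z) (hne : z ≠ 1) :
    ∃ (j : ℤ) (y : Perm ℤ), 1 ≤ j ∧ j ≤ n ∧ y ∈ Sgrp n ∧ y⁻¹ = y ∧ y j < y (j + 1) ∧
      twistedConj j y = z ∧
      dedupFirst (cycWordDes n z) = (dedupFirst (cycWordDes n y)).map (tA j) := by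
  obtain ⟨j, h₁, h₂, hj, hj'⟩ := exists_lt_apply_and_apply_succ_le hz hzi hne
  have hs := Sgrp.tA_mem h₁ h₂
  by_cases hsucc : z j = j + 1
  · have hsucc' : z (j + 1) = j := by rw [← hsucc, apply_apply_of_inv_eq hzi]
    have hcomm : tA j * z = z * tA j :=
      tA_mul_comm_of_eq_swap (by rw [hsucc, hsucc', swap_comm]; rfl)
    refine ⟨j, z * tA j, h₁, h₂, Sgrp.mul_mem hz hs, by rw [mul_inv_rev, tA_inv, hzi, hcomm],
      by simp [hsucc, hsucc'], ?_, dedupFirst_cycWordDes_of_apply_eq_succ hzi h₁ h₂ hsucc⟩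
    rw [twistedConj, if_pos (by simp [hsucc, hsucc']), mul_assoc, tA_mul_tA, mul_one]
  · have hne' : z (j + 1) ≠ j := fun h =>
      hsucc (by simpa [h] using apply_apply_of_inv_eq hzi (j + 1))
    refine ⟨j, tA j * z * tA j, h₁, h₂, Sgrp.mul_mem (Sgrp.mul_mem hs hz) hs,
      by rw [mul_inv_rev, mul_inv_rev, tA_inv, hzi, mul_assoc], ?_, ?_, ?_⟩
    · simp only [Perm.mul_apply, tA_apply_left, tA_apply_right]
      rw [tA_apply _ (z (j + 1)), tA_apply_of_ne_of_ne (x := z j) (by omega) (by omega)]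
      split_ifs <;> omega
    · rw [twistedConj, if_neg (by simp [tA_apply_of_ne_of_ne (x := z j) (by omega) hsucc]; omega)]
      simp only [← mul_assoc, tA_mul_tA, one_mul]
      rw [mul_assoc, tA_mul_tA, mul_one]
    · rw [cycWordDes_tA_mul_mul_tA hzi h₁ h₂ (by omega), dedupFirst_map (tA j).injective,
        List.map_map]
      simp [Function.comp_def]

end involutions

namespace IsDemazure

variable {n : ℕ} {dem : Perm ℤ → Perm ℤ → Perm ℤ}

lemma exists_atom_eq_dedupFirst_cycWordDes (hd : IsDemazure n dem) {z : Perm ℤ}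
    (hz : z ∈ Sgrp n) (hzi : z⁻¹ = z) :
    ∃ w ∈ Sgrp n, 4 * invCount n w = atomWeight n z ∧ dem w w⁻¹ = z ∧
      ∀ i : ℤ, 1 ≤ i → i ≤ (n : ℤ) + 1 →
        w i = (dedupFirst (cycWordDes n z)).getD (i - 1).toNat 0 := by
  induction h : atomWeight n z using Nat.strong_induction_on generalizing z with
  | _ k ih =>
    rcases eq_or_ne z 1 with rfl | hne
    · refine ⟨1, Sgrp.one_mem, by simp [← h], by rw [inv_one]; exact (hd.one 1).1,
        fun i h₁ h₂ => ?_⟩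
      rw [getD_dedupFirst_cycWordDes_one n h₁ h₂, Perm.one_apply]
    obtain ⟨j, y, h₁, h₂, hy, hyi, hlt, rfl, hword⟩ := exists_eq_twistedConj hz hzi hne
    have hweight := atomWeight_twistedConj hy hyi h₁ h₂ hlt
    obtain ⟨w, hw, hcount, hdem, hwword⟩ := ih _ (by omega) hy hyi rfl
    -- `w` cannot have a left descent at `j`, since then `y = w ∘ w⁻¹` would have one.
    have hasc : w⁻¹ j < w⁻¹ (j + 1) := by
      refine lt_of_le_of_ne (not_lt.mp fun hdesc => ?_) (w⁻¹.injective.ne (by omega))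
      have := hd.dem_self_inv_apply_succ_lt hw h₁ h₂ hdesc
      rw [hdem] at this
      omega
    refine ⟨tA j * w, Sgrp.mul_mem (Sgrp.tA_mem h₁ h₂) hw, ?_, ?_, fun i hi₁ hi₂ => ?_⟩
    · rw [invCount_tA_mul_of_lt hw h₁ h₂ hasc]; omega
    · rw [hd.dem_tA_mul_inv hw h₁ h₂ hasc, hdem, hd.dem_tA_dem_tA_of_lt hy hyi h₁ h₂ hlt]
    · rw [Perm.mul_apply, hwword i hi₁ hi₂, hword, ← List.getD_map (f := ⇑(tA j)),
        tA_apply_of_ne_of_ne (x := 0) (by omega) (by omega)]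

end IsDemazure

/-- For every involution `z ∈ S_{n+1}`, the permutation
`[[Cyc(z)]]_des` (the deduplication of the word `b₁a₁b₂a₂⋯b_ma_m`) is an
element of `A^A(z)`, i.e. a minimal-length permutation `w` with `w ∘ w⁻¹ = z`
under the Demazure product `dem`. -/
theorem stmt17 (n : ℕ) (dem : Equiv.Perm ℤ → Equiv.Perm ℤ → Equiv.Perm ℤ)
    (hassoc : ∀ u v w, dem (dem u v) w = dem u (dem v w))
    (hone : ∀ w, dem w 1 = w ∧ dem 1 w = w)
    (hright : ∀ w ∈ Sgrp n, ∀ j : ℤ, 1 ≤ j → j ≤ (n : ℤ) →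
      dem w (tA j) = if lenA n (w * tA j) = lenA n w + 1 then w * tA j else w)
    (hleft : ∀ w ∈ Sgrp n, ∀ j : ℤ, 1 ≤ j → j ≤ (n : ℤ) →
      dem (tA j) w = if lenA n (tA j * w) = lenA n w + 1 then tA j * w else w)
    (z : Equiv.Perm ℤ) (hz : z ∈ Sgrp n) (hzi : z⁻¹ = z) :
    ∃ w : Equiv.Perm ℤ, w ∈ Sgrp n ∧
      (∀ i : ℤ, 1 ≤ i → i ≤ (n : ℤ) + 1 →
        w i = (dedupFirst (cycWordDes n z)).getD (i - 1).toNat 0) ∧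
      dem w w⁻¹ = z ∧
      ∀ v ∈ Sgrp n, dem v v⁻¹ = z → lenA n w ≤ lenA n v := by
  have hd : IsDemazure n dem := ⟨hassoc, hone, hright, hleft⟩
  obtain ⟨w, hw, hcount, hdem, hword⟩ := hd.exists_atom_eq_dedupFirst_cycWordDes hz hzi
  refine ⟨w, hw, hword, hdem, fun v hv hvz => ?_⟩
  have hbound := (hd.dem_self_inv_spec hv).2.2
  rw [hvz] at hbound
  rw [lenA_eq_invCount hw, lenA_eq_invCount hv]
  omega
end

section
/- Let n be even, z ∈ W⁺_n a fixed-point-free involution (no i ∈ [n] with z(i) = i), and w a minimal-length element of W⁺_n with w ∘ y ∘ w⁻¹ = z for y = t₁t₃t₅⋯t_{n−1}. If i ∈ [n−3] is odd and w_{i+1} > w_{i+3}, then the consecutive one-line values satisfy w_i w_{i+1} w_{i+2} w_{i+3} = A,D,B,C for some integers A < B < C < D. -/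
/-- The simple generators of the even-signed permutation group `W⁺_n`:
`tD 0 = t₋₁ = (−2,1)(−1,2)` and `tD i = t_i = (i,i+1)(−i−1,−i)` for `i ≥ 1`. -/
def tD (i : ℕ) : Equiv.Perm ℤ :=
  if i = 0 then Equiv.swap (-2) 1 * Equiv.swap (-1) 2
  else Equiv.swap (i : ℤ) ((i : ℤ) + 1) * Equiv.swap (-(i : ℤ) - 1) (-(i : ℤ))

/-- The group `W⁺_n`: signed permutations of `[±n]` with an even number of
sign changes on `{1, …, n}`. -/
def Dgrp (n : ℕ) : Set (Equiv.Perm ℤ) :=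
  {w | (∀ i : ℤ, w (-i) = -(w i)) ∧ (∀ i : ℤ, (n : ℤ) < |i| → w i = i) ∧
    Even (((Finset.Icc (1 : ℤ) (n : ℤ)).filter (fun i => w i < 0)).card)}

/-- Coxeter length on `W⁺_n`. -/
noncomputable def lenD (n : ℕ) (w : Equiv.Perm ℤ) : ℕ :=
  sInf {m | ∃ l : List ℕ, (∀ i ∈ l, i < n) ∧ (l.map tD).prod = w ∧ l.length = m}

/-- The element `y = t₁ t₃ t₅ ⋯ t_{n−1}` of `W⁺_n` (for `n` even). -/
def yfpf (n : ℕ) : Equiv.Perm ℤ :=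
  (((List.range n).filter (fun i => i % 2 == 1)).map tD).prod

/-!
If `v s` is reduced, twisted conjugation `x ↦ x ∘ y ∘ x⁻¹` by `v s` is twisted conjugation by `v`
of `s ∘ y ∘ s`; for an involution `y` this is `y` when `s` is a descent of `y`, and `s y s` when
`s` is an ascent of both `y` and `s y`. If `w_{i+2} < w_i`, put `v = w t_{i+1} t_i t_{i+2}`. Then
`w = v t_{i+2} t_i t_{i+1}` and `u = v t_i t_{i+1}` are reduced, and both twist `y` into
`v ∘ y' ∘ v⁻¹` with `y' = t_i t_{i+1} y t_{i+1} t_i`, because `t_{i+2}` is a descent of `y'`.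
So `u` is a shorter solution, contradicting minimality. The same argument with one generator
gives `w_j < w_{j+1}` for odd `j`, in particular `w_{i+2} < w_{i+3}`. Lengths are computed as
type-D inversion numbers.
-/

open Equiv Finset

lemma tD_zero_apply (x : ℤ) :
    tD 0 x = if x = -2 then 1 else if x = 1 then -2 else if x = -1 then 2
      else if x = 2 then -1 else x := by
  simp only [tD, if_true, Perm.mul_apply, swap_apply_def]
  split_ifs <;> first | omega | contradiction

lemma tD_apply_of_ne_zero {k : ℕ} (hk : k ≠ 0) (x : ℤ) :
    tD k x = if x = k then (k : ℤ) + 1 else if x = (k : ℤ) + 1 then (k : ℤ)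
      else if x = -(k : ℤ) - 1 then -(k : ℤ) else if x = -(k : ℤ) then -(k : ℤ) - 1 else x := by
  simp only [tD, hk, if_false, Perm.mul_apply, swap_apply_def]
  split_ifs <;> omega

lemma tD_apply_of_pos {k : ℕ} (hk : k ≠ 0) {x : ℤ} (hx : 0 < x) :
    tD k x = if x = k then (k : ℤ) + 1 else if x = (k : ℤ) + 1 then (k : ℤ) else x := by
  rw [tD_apply_of_ne_zero hk]
  split_ifs <;> omega

lemma tD_tD (k : ℕ) (x : ℤ) : tD k (tD k x) = x := by
  rcases eq_or_ne k 0 with rfl | hk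
  · simp only [tD_zero_apply]; split_ifs <;> first | omega | contradiction
  · simp only [tD_apply_of_ne_zero hk]; split_ifs <;> omega

lemma tD_mul_self (k : ℕ) : tD k * tD k = 1 :=
  Perm.ext (tD_tD k)

lemma tD_inv (k : ℕ) : (tD k)⁻¹ = tD k :=
  inv_eq_of_mul_eq_one_right (tD_mul_self k)

lemma mul_tD_mul_tD (v : Perm ℤ) (k : ℕ) : v * tD k * tD k = v := by
  rw [mul_assoc, tD_mul_self, mul_one]

lemma tD_neg (k : ℕ) (x : ℤ) : tD k (-x) = -tD k x := by
  rcases eq_or_ne k 0 with rfl | hk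
  · simp only [tD_zero_apply]; split_ifs <;> omega
  · simp only [tD_apply_of_ne_zero hk]; split_ifs <;> omega

lemma tD_apply_of_lt_abs {k : ℕ} {x : ℤ} (hk : (k : ℤ) + 1 < |x|) (h2 : 2 < |x|) :
    tD k x = x := by
  rw [lt_abs] at hk h2
  rcases eq_or_ne k 0 with rfl | hk0
  · rw [tD_zero_apply]; split_ifs <;> omega
  · rw [tD_apply_of_ne_zero hk0]; split_ifs <;> omega

section apply

variable {w : Perm ℤ} {k : ℕ}

lemma tD_apply_self (hk : k ≠ 0) : tD k k = k + 1 := by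
  rw [tD_apply_of_ne_zero hk, if_pos rfl]

lemma tD_apply_add_one (hk : k ≠ 0) : tD k (k + 1) = k := by
  rw [tD_apply_of_ne_zero hk, if_neg (by omega), if_pos rfl]

lemma tD_apply_of_ne (hk : k ≠ 0) {x : ℤ} (hx : 0 < x) (h₁ : x ≠ k) (h₂ : x ≠ k + 1) :
    tD k x = x := by
  rw [tD_apply_of_pos hk hx, if_neg h₁, if_neg h₂]

lemma mul_tD_apply_self (hk : k ≠ 0) : (w * tD k) k = w (k + 1) := by
  rw [Perm.mul_apply, tD_apply_self hk]

lemma mul_tD_apply_add_one (hk : k ≠ 0) : (w * tD k) (k + 1) = w k := by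
  rw [Perm.mul_apply, tD_apply_add_one hk]

lemma mul_tD_zero_apply_one (hneg : ∀ x, w (-x) = -w x) : (w * tD 0) 1 = -w 2 := by
  rw [Perm.mul_apply, tD_zero_apply, ← hneg]; norm_num

lemma mul_tD_zero_apply_two (hneg : ∀ x, w (-x) = -w x) : (w * tD 0) 2 = -w 1 := by
  rw [Perm.mul_apply, tD_zero_apply, ← hneg]; norm_num

end apply

section Dgrp

variable {n : ℕ} {w : Perm ℤ}

lemma apply_zero_of_mem_Dgrp (hw : w ∈ Dgrp n) : w 0 = 0 := by
  have := hw.1 0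
  rw [neg_zero] at this
  omega

lemma abs_apply_le (hw : ∀ x : ℤ, (n : ℤ) < |x| → w x = x) {x : ℤ} (hx : |x| ≤ n) :
    |w x| ≤ n := by
  by_contra! h
  have hfix : w x = x := w.injective (hw _ h)
  rw [hfix] at h
  omega

lemma card_filter_comp_perm {α : Type*} (s : Finset α) (σ : Perm α) (hσ : ∀ x, σ x ∈ s ↔ x ∈ s)
    (p : α → Prop) [DecidablePred p] : #(s.filter (fun x => p (σ x))) = #(s.filter p) := by
  apply card_nbij' σ σ.symm <;> intro x hx <;> simp_all [← hσ (σ.symm x)]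

lemma inv_mem_Dgrp (hw : w ∈ Dgrp n) : w⁻¹ ∈ Dgrp n := by
  obtain ⟨hneg, hfix, hpar⟩ := hw
  have hneg' : ∀ x, w⁻¹ (-x) = -w⁻¹ x := fun x => by
    rw [Perm.inv_eq_iff_eq, hneg]; simp
  have hfix' : ∀ x : ℤ, (n : ℤ) < |x| → w⁻¹ x = x := fun x hx => by
    rw [Perm.inv_eq_iff_eq, hfix x hx]
  refine ⟨hneg', hfix', ?_⟩
  have hcard : #{x ∈ Icc (1 : ℤ) n | w⁻¹ x < 0} = #{x ∈ Icc (1 : ℤ) n | w x < 0} := by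
    apply card_nbij' (fun x => -w⁻¹ x) (fun x => -w x)
    · intro x hx
      simp only [coe_filter, Set.mem_ofPred_eq, mem_Icc] at hx ⊢
      have := abs_apply_le hfix' (x := x) (by rw [abs_le]; omega)
      rw [abs_le] at this
      refine ⟨⟨by omega, by omega⟩, ?_⟩
      rw [hneg]
      simp only [Perm.coe_inv, apply_symm_apply]
      omega
    · intro x hx
      simp only [coe_filter, Set.mem_ofPred_eq, mem_Icc] at hx ⊢
      have := abs_apply_le hfix (x := x) (by rw [abs_le]; omega)
      rw [abs_le] at this
      refine ⟨⟨by omega, by omega⟩, ?_⟩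
      rw [hneg']
      simp only [Perm.coe_inv, symm_apply_apply]
      omega
    · intro x _
      simp only [hneg, neg_neg, Perm.coe_inv, apply_symm_apply]
    · intro x _
      simp only [hneg', neg_neg, Perm.coe_inv, symm_apply_apply]
  rwa [hcard]

lemma mul_tD_mem_Dgrp (hn : 2 ≤ n) (hw : w ∈ Dgrp n) {k : ℕ} (hk : k + 1 ≤ n) :
    w * tD k ∈ Dgrp n := by
  obtain ⟨hneg, hfix, hpar⟩ := hw
  refine ⟨fun x => by simp only [Perm.mul_apply, tD_neg, hneg], fun x hx => ?_, ?_⟩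
  · rw [Perm.mul_apply, tD_apply_of_lt_abs (by omega) (by omega), hfix x hx]
  rcases eq_or_ne k 0 with rfl | hk0
  · -- `t₋₁` turns `w 1, w 2` into `-w 2, -w 1`, changing the number of signs by `0` or `±2`
    have hsplit : Icc (1 : ℤ) n = insert 1 (insert 2 (Icc (3 : ℤ) n)) := by
      ext x; simp only [mem_Icc, mem_insert]; omega
    have h0 := apply_zero_of_mem_Dgrp ⟨hneg, hfix, hpar⟩
    have h1 : w 1 ≠ 0 := fun h => by simpa using w.injective (h.trans h0.symm)
    have h2 : w 2 ≠ 0 := fun h => by simpa using w.injective (h.trans h0.symm)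
    have hrest : ∀ x ∈ Icc (3 : ℤ) n, (w * tD 0) x = w x := fun x hx => by
      rw [mem_Icc] at hx
      rw [Perm.mul_apply, tD_zero_apply]
      split_ifs <;> omega
    rw [card_filter, hsplit, sum_insert (by simp), sum_insert (by simp),
      sum_congr rfl (fun x hx => by rw [hrest x hx]),
      mul_tD_zero_apply_one hneg, mul_tD_zero_apply_two hneg]
    rw [card_filter, hsplit, sum_insert (by simp), sum_insert (by simp)] at hpar
    rw [Nat.even_iff] at hpar ⊢
    split_ifs at hpar ⊢ <;> omega
  · convert hpar using 1
    refine card_filter_comp_perm _ (tD k) (fun x => ?_) (fun x => w x < 0)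
    simp only [mem_Icc]
    rw [tD_apply_of_ne_zero hk0]
    split_ifs <;> omega

lemma tD_mul_mem_Dgrp (hn : 2 ≤ n) (hw : w ∈ Dgrp n) {k : ℕ} (hk : k + 1 ≤ n) :
    tD k * w ∈ Dgrp n := by
  simpa [mul_inv_rev, tD_inv] using inv_mem_Dgrp (mul_tD_mem_Dgrp hn (inv_mem_Dgrp hw) hk)

end Dgrp

noncomputable def posPairs (n : ℕ) : Finset (ℤ × ℤ) :=
  (Icc (1 : ℤ) n ×ˢ Icc (1 : ℤ) n).filter fun p => p.1 < p.2

def pairInv (w : Perm ℤ) (p : ℤ × ℤ) : ℕ :=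
  (if w p.2 < w p.1 then 1 else 0) + (if w p.2 < -w p.1 then 1 else 0)

noncomputable def invD (n : ℕ) (w : Perm ℤ) : ℕ :=
  ∑ p ∈ posPairs n, pairInv w p

section invD

variable {n : ℕ} {w : Perm ℤ}

lemma mem_posPairs {p : ℤ × ℤ} : p ∈ posPairs n ↔ 1 ≤ p.1 ∧ p.1 < p.2 ∧ p.2 ≤ n := by
  simp only [posPairs, mem_filter, mem_product, mem_Icc]
  omega

lemma invD_one : invD n 1 = 0 :=
  sum_eq_zero fun ⟨a, b⟩ hp => by
    rw [mem_posPairs] at hp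
    have h₁ : ¬b < a := by omega
    have h₂ : ¬b < -a := by omega
    simp [pairInv, h₁, h₂]

lemma invD_add_pairInv_eq {u : Perm ℤ} {a : ℤ} (ha : 1 ≤ a) (han : a + 1 ≤ n)
    (h : ∀ b c : ℤ, 1 ≤ b → b < c → (b, c) ≠ (a, a + 1) →
      pairInv u (b, c) = pairInv w (swap a (a + 1) b, swap a (a + 1) c)) :
    invD n u + pairInv w (a, a + 1) = invD n w + pairInv u (a, a + 1) := by
  have hmem : (a, a + 1) ∈ posPairs n := mem_posPairs.mpr ⟨ha, by omega, han⟩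
  rw [invD, invD, ← sum_erase_add _ _ hmem, ← sum_erase_add _ _ hmem, add_assoc, add_assoc,
    add_comm (pairInv u _)]
  congr 1
  have hσ : ∀ p ∈ (posPairs n).erase (a, a + 1),
      (swap a (a + 1) p.1, swap a (a + 1) p.2) ∈ (posPairs n).erase (a, a + 1) := by
    rintro ⟨b, c⟩ hp
    simp only [mem_erase, mem_posPairs, ne_eq, Prod.mk.injEq, swap_apply_def] at hp ⊢
    split_ifs <;> omega
  refine sum_nbij' (fun p => (swap a (a + 1) p.1, swap a (a + 1) p.2))
    (fun p => (swap a (a + 1) p.1, swap a (a + 1) p.2)) hσ hσ (by simp) (by simp) ?_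
  rintro ⟨b, c⟩ hp
  simp only [mem_erase, mem_posPairs] at hp
  exact h b c hp.2.1 hp.2.2.1 hp.1

lemma invD_mul_tD_of_lt {k : ℕ} (hk : k ≠ 0) (hkn : k + 1 ≤ n) (h : w k < w (k + 1)) :
    invD n (w * tD k) = invD n w + 1 := by
  have key := invD_add_pairInv_eq (u := w * tD k) (w := w) (n := n) (a := k) (by omega)
    (by omega) fun b c hb hbc _ => by
      simp only [pairInv, Perm.mul_apply, tD_apply_of_pos hk hb,
        tD_apply_of_pos (x := c) hk (by omega), swap_apply_def]
      rfl
  simp only [pairInv, mul_tD_apply_self hk, mul_tD_apply_add_one hk] at key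
  split_ifs at key <;> omega

lemma invD_mul_tD_zero_of_pos (hn : 2 ≤ n) (hneg : ∀ x, w (-x) = -w x) (h : 0 < w 1 + w 2) :
    invD n (w * tD 0) = invD n w + 1 := by
  have hfix : ∀ x : ℤ, 3 ≤ x → (w * tD 0) x = w x := fun x hx => by
    rw [Perm.mul_apply, tD_zero_apply]
    split_ifs <;> omega
  have key := invD_add_pairInv_eq (u := w * tD 0) (w := w) (n := n) (a := 1) le_rfl
    (by omega) fun b c hb hbc hne => by
      rw [show (1 : ℤ) + 1 = 2 by norm_num] at hne ⊢
      have hc : 3 ≤ c := by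
        by_contra
        exact hne (by ext <;> simp <;> omega)
      rw [swap_apply_of_ne_of_ne (x := c) (by omega) (by omega)]
      simp only [pairInv, hfix c hc]
      rcases (by omega : b = 1 ∨ b = 2 ∨ 3 ≤ b) with rfl | rfl | hb
      · simp only [mul_tD_zero_apply_one hneg, swap_apply_left]
        split_ifs <;> omega
      · simp only [mul_tD_zero_apply_two hneg, swap_apply_right]
        split_ifs <;> omega
      · rw [hfix b hb, swap_apply_of_ne_of_ne (by omega) (by omega)]
  norm_num only at key
  simp only [pairInv, mul_tD_zero_apply_one hneg, mul_tD_zero_apply_two hneg] at key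
  split_ifs at key <;> omega

end invD

section length

variable {n : ℕ} {w : Perm ℤ}

lemma invD_mul_tD_of_gt {k : ℕ} (hk : k ≠ 0) (hkn : k + 1 ≤ n) (h : w (k + 1) < w k) :
    invD n (w * tD k) + 1 = invD n w := by
  have := invD_mul_tD_of_lt (w := w * tD k) hk hkn
    (by rwa [mul_tD_apply_self hk, mul_tD_apply_add_one hk])
  rwa [mul_tD_mul_tD, eq_comm] at this

lemma invD_mul_tD_zero_of_neg (hn : 2 ≤ n) (hneg : ∀ x, w (-x) = -w x) (h : w 1 + w 2 < 0) :
    invD n (w * tD 0) + 1 = invD n w := by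
  have hneg' : ∀ x, (w * tD 0) (-x) = -(w * tD 0) x := fun x => by
    simp only [Perm.mul_apply, tD_neg, hneg]
  have := invD_mul_tD_zero_of_pos hn hneg'
    (by rw [mul_tD_zero_apply_one hneg, mul_tD_zero_apply_two hneg]; omega)
  rwa [mul_tD_mul_tD, eq_comm] at this

lemma apply_one_add_apply_two_ne_zero (hneg : ∀ x, w (-x) = -w x) : w 1 + w 2 ≠ 0 := fun h => by
  have : w 2 = w (-1) := by rw [hneg]; omega
  simpa using w.injective this

lemma invD_mul_tD_le (hn : 2 ≤ n) {k : ℕ} (hk : k + 1 ≤ n) (hneg : ∀ x, w (-x) = -w x) :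
    invD n (w * tD k) ≤ invD n w + 1 := by
  rcases eq_or_ne k 0 with rfl | hk0
  · rcases (apply_one_add_apply_two_ne_zero hneg).lt_or_gt with h | h
    · have := invD_mul_tD_zero_of_neg hn hneg h
      omega
    · rw [invD_mul_tD_zero_of_pos hn hneg h]
  · rcases (w.injective.ne (show (k : ℤ) ≠ k + 1 by omega)).lt_or_gt with h | h
    · rw [invD_mul_tD_of_lt hk0 hk h]
    · have := invD_mul_tD_of_gt hk0 hk h
      omega

lemma prod_map_tD_neg (l : List ℕ) (x : ℤ) : (l.map tD).prod (-x) = -(l.map tD).prod x := by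
  induction l generalizing x with
  | nil => rfl
  | cons k l ih => simp only [List.map_cons, List.prod_cons, Perm.mul_apply, ih, tD_neg]

lemma invD_prod_map_tD_le (hn : 2 ≤ n) (l : List ℕ) (hl : ∀ i ∈ l, i < n) :
    invD n (l.map tD).prod ≤ l.length := by
  induction l using List.reverseRecOn with
  | nil => simp [invD_one]
  | append_singleton l k ih =>
    simp only [List.map_append, List.map_cons, List.map_nil, List.prod_append, List.prod_cons,
      List.prod_nil, mul_one, List.length_append, List.length_cons, List.length_nil]
    have := invD_mul_tD_le hn (k := k) (hl k (by simp)) (prod_map_tD_neg l)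
    have := ih fun i hi => hl i (by simp [hi])
    omega

lemma eq_one_of_forall_lt (hn : 2 ≤ n) (hw : w ∈ Dgrp n)
    (hmono : ∀ a : ℤ, 1 ≤ a → a < n → w a < w (a + 1)) (h12 : 0 < w 1 + w 2) : w = 1 := by
  have hw0 := apply_zero_of_mem_Dgrp hw
  obtain ⟨hneg, hfix, hpar⟩ := hw
  have hlt : ∀ a b : ℤ, 1 ≤ a → a < b → b ≤ n → w a < w b := by
    intro a b ha hab hbn
    induction b, hab using Int.leInduction with
    | base => exact hmono a ha (by omega)
    | succ b hab ih => exact (ih (by omega)).trans (hmono b (by omega) (by omega))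
  have hpos₂ : ∀ x : ℤ, 2 ≤ x → x ≤ n → 0 < w x := fun x hx hxn => by
    have : w 1 < w 2 := hmono 1 le_rfl (by omega)
    rcases hx.eq_or_lt with rfl | hx
    · omega
    · have := hlt 2 x (by omega) hx hxn
      omega
  -- a negative `w 1` would be the only sign change on `[1, n]`
  have hpos₁ : 0 < w 1 := by
    by_contra! h
    have h1 : w 1 < 0 := h.lt_of_ne (by simpa [hw0] using w.injective.ne (one_ne_zero (α := ℤ)))
    have : {x ∈ Icc (1 : ℤ) n | w x < 0} = {1} := by
      ext x
      simp only [mem_filter, mem_Icc, mem_singleton]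
      constructor
      · rintro ⟨⟨hx1, hxn⟩, hx⟩
        by_contra hx'
        have := hpos₂ x (by omega) hxn
        omega
      · rintro rfl
        exact ⟨⟨le_rfl, by omega⟩, h1⟩
    rw [this, card_singleton] at hpar
    exact Nat.not_even_one hpar
  have hge : ∀ x : ℤ, 1 ≤ x → x ≤ n → x ≤ w x := by
    intro x hx
    induction x, hx using Int.leInduction with
    | base => exact fun _ => hpos₁
    | succ x hx ih => exact fun hxn => (ih (by omega)).trans_lt (hmono x hx (by omega))
  have hle : ∀ x : ℤ, x ≤ n → 1 ≤ x → w x ≤ x := by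
    intro x hx
    induction x, hx using Int.leInductionDown with
    | base => exact fun h1 => (abs_le.mp (abs_apply_le hfix (x := n) (by simp))).2
    | pred x hx ih =>
      intro h1
      have : w (x - 1) < w x := by simpa using hmono (x - 1) h1 (by omega)
      have := ih (by omega)
      omega
  have hid : ∀ x : ℤ, 1 ≤ x → x ≤ n → w x = x := fun x h1 hxn =>
    le_antisymm (hle x hxn h1) (hge x h1 hxn)
  ext x
  simp only [Perm.coe_one, id_eq]
  rcases lt_trichotomy x 0 with hx | rfl | hx
  · by_cases hxn : -x ≤ n
    · have := hneg (-x)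
      rw [neg_neg, hid (-x) (by omega) hxn] at this
      omega
    · exact hfix x (by rw [abs_of_neg hx]; omega)
  · exact hw0
  · by_cases hxn : x ≤ n
    · exact hid x hx hxn
    · exact hfix x (by rw [abs_of_pos hx]; omega)

lemma exists_invD_mul_tD (hn : 2 ≤ n) (hw : w ∈ Dgrp n) (h1 : w ≠ 1) :
    ∃ k : ℕ, k + 1 ≤ n ∧ invD n (w * tD k) + 1 = invD n w := by
  by_contra! H
  refine h1 (eq_one_of_forall_lt hn hw (fun a ha han => ?_) ?_)
  · lift a to ℕ using (by omega)
    by_contra! hle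
    exact H a (by omega) (invD_mul_tD_of_gt (by omega) (by omega)
      (hle.lt_of_ne (w.injective.ne (by omega))))
  · by_contra! hle
    exact H 0 (by omega) (invD_mul_tD_zero_of_neg hn hw.1
      (hle.lt_of_ne (apply_one_add_apply_two_ne_zero hw.1)))

lemma exists_word_length_eq_invD (hn : 2 ≤ n) (m : ℕ) :
    ∀ w ∈ Dgrp n, invD n w = m →
      ∃ l : List ℕ, (∀ i ∈ l, i < n) ∧ (l.map tD).prod = w ∧ l.length = m := by
  induction m with
  | zero =>
    intro w hw hw0
    obtain rfl : w = 1 := by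
      by_contra h1
      obtain ⟨k, -, hk⟩ := exists_invD_mul_tD hn hw h1
      omega
    exact ⟨[], by simp, rfl, rfl⟩
  | succ m ih =>
    intro w hw hwm
    obtain ⟨k, hk, hinv⟩ := exists_invD_mul_tD hn hw (by rintro rfl; simp [invD_one] at hwm)
    obtain ⟨l, hl, hprod, hlen⟩ := ih (w * tD k) (mul_tD_mem_Dgrp hn hw hk) (by omega)
    refine ⟨l ++ [k], fun i hi => ?_, by simp [hprod, mul_tD_mul_tD], by simp [hlen]⟩
    rcases List.mem_append.mp hi with hi | hi
    · exact hl i hi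
    · rw [List.mem_singleton.mp hi]
      omega

theorem lenD_eq_invD (hn : 2 ≤ n) (hw : w ∈ Dgrp n) : lenD n w = invD n w := by
  obtain ⟨l, hl, hprod, hlen⟩ := exists_word_length_eq_invD hn _ w hw rfl
  refine le_antisymm (Nat.sInf_le ⟨l, hl, hprod, hlen⟩) (le_csInf ⟨_, l, hl, hprod, hlen⟩ ?_)
  rintro m ⟨l', hl', rfl, rfl⟩
  exact invD_prod_map_tD_le hn l' hl'

lemma prod_map_tD_reverse (l : List ℕ) : (l.reverse.map tD).prod = ((l.map tD).prod)⁻¹ := by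
  simp [List.prod_inv_reverse, tD_inv, Function.comp_def]

lemma lenD_inv (w : Perm ℤ) : lenD n w⁻¹ = lenD n w := by
  have key : ∀ v : Perm ℤ,
      {m | ∃ l : List ℕ, (∀ i ∈ l, i < n) ∧ (l.map tD).prod = v ∧ l.length = m} ⊆
        {m | ∃ l : List ℕ, (∀ i ∈ l, i < n) ∧ (l.map tD).prod = v⁻¹ ∧ l.length = m} := by
    rintro v m ⟨l, hl, rfl, rfl⟩
    exact ⟨l.reverse, by simpa using hl, prod_map_tD_reverse l, by simp⟩
  unfold lenD
  congr 1
  exact ((key w⁻¹).trans (by rw [inv_inv])).antisymm (key w)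

lemma lenD_mul_tD_of_lt (hw : w ∈ Dgrp n) {k : ℕ} (hk : k ≠ 0) (hkn : k + 1 ≤ n)
    (h : w k < w (k + 1)) : lenD n (w * tD k) = lenD n w + 1 := by
  rw [lenD_eq_invD (by omega) hw, lenD_eq_invD (by omega) (mul_tD_mem_Dgrp (by omega) hw hkn),
    invD_mul_tD_of_lt hk hkn h]

lemma lenD_mul_tD_of_gt (hw : w ∈ Dgrp n) {k : ℕ} (hk : k ≠ 0) (hkn : k + 1 ≤ n)
    (h : w (k + 1) < w k) : lenD n (w * tD k) + 1 = lenD n w := by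
  rw [lenD_eq_invD (by omega) hw, lenD_eq_invD (by omega) (mul_tD_mem_Dgrp (by omega) hw hkn),
    invD_mul_tD_of_gt hk hkn h]

lemma lenD_tD_mul_of_lt (hw : w ∈ Dgrp n) {k : ℕ} (hk : k ≠ 0) (hkn : k + 1 ≤ n)
    (h : w⁻¹ k < w⁻¹ (k + 1)) : lenD n (tD k * w) = lenD n w + 1 := by
  rw [← lenD_inv, mul_inv_rev, tD_inv, lenD_mul_tD_of_lt (inv_mem_Dgrp hw) hk hkn h, lenD_inv]

lemma lenD_tD_mul_of_gt (hw : w ∈ Dgrp n) {k : ℕ} (hk : k ≠ 0) (hkn : k + 1 ≤ n)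
    (h : w⁻¹ (k + 1) < w⁻¹ k) : lenD n (tD k * w) + 1 = lenD n w := by
  rw [← lenD_inv, mul_inv_rev, tD_inv, lenD_mul_tD_of_gt (inv_mem_Dgrp hw) hk hkn h, lenD_inv]

end length

structure IsDemazureProduct (n : ℕ) (dem : Perm ℤ → Perm ℤ → Perm ℤ) : Prop where
  assoc : ∀ u v w, dem (dem u v) w = dem u (dem v w)
  mul_tD : ∀ w ∈ Dgrp n, ∀ i : ℕ, i < n →
    dem w (tD i) = if lenD n (w * tD i) = lenD n w + 1 then w * tD i else w
  tD_mul : ∀ w ∈ Dgrp n, ∀ i : ℕ, i < n →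
    dem (tD i) w = if lenD n (tD i * w) = lenD n w + 1 then tD i * w else w

namespace IsDemazureProduct

variable {n : ℕ} {dem : Perm ℤ → Perm ℤ → Perm ℤ} {u y : Perm ℤ} {k : ℕ}

lemma dem_tD_of_lt (hD : IsDemazureProduct n dem) (hu : u ∈ Dgrp n) (hk : k ≠ 0)
    (hkn : k + 1 ≤ n) (h : u k < u (k + 1)) : dem u (tD k) = u * tD k := by
  rw [hD.mul_tD u hu k (by omega), if_pos (lenD_mul_tD_of_lt hu hk hkn h)]

lemma dem_tD_of_gt (hD : IsDemazureProduct n dem) (hu : u ∈ Dgrp n) (hk : k ≠ 0)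
    (hkn : k + 1 ≤ n) (h : u (k + 1) < u k) : dem u (tD k) = u := by
  have := lenD_mul_tD_of_gt hu hk hkn h
  rw [hD.mul_tD u hu k (by omega), if_neg (by omega)]

lemma tD_dem_of_lt (hD : IsDemazureProduct n dem) (hu : u ∈ Dgrp n) (hk : k ≠ 0)
    (hkn : k + 1 ≤ n) (h : u⁻¹ k < u⁻¹ (k + 1)) : dem (tD k) u = tD k * u := by
  rw [hD.tD_mul u hu k (by omega), if_pos (lenD_tD_mul_of_lt hu hk hkn h)]

lemma tD_dem_of_gt (hD : IsDemazureProduct n dem) (hu : u ∈ Dgrp n) (hk : k ≠ 0)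
    (hkn : k + 1 ≤ n) (h : u⁻¹ (k + 1) < u⁻¹ k) : dem (tD k) u = u := by
  have := lenD_tD_mul_of_gt hu hk hkn h
  rw [hD.tD_mul u hu k (by omega), if_neg (by omega)]

lemma conj_tD_of_lt (hD : IsDemazureProduct n dem) (hy : y ∈ Dgrp n) (hyinv : y⁻¹ = y)
    (hk : k ≠ 0) (hkn : k + 1 ≤ n) (h₁ : y k < y (k + 1))
    (h₂ : (tD k * y) k < (tD k * y) (k + 1)) :
    dem (dem (tD k) y) (tD k) = tD k * y * tD k := by
  rw [hD.tD_dem_of_lt hy hk hkn (by rwa [hyinv]),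
    hD.dem_tD_of_lt (tD_mul_mem_Dgrp (by omega) hy hkn) hk hkn h₂]

lemma conj_tD_of_gt (hD : IsDemazureProduct n dem) (hy : y ∈ Dgrp n) (hyinv : y⁻¹ = y)
    (hk : k ≠ 0) (hkn : k + 1 ≤ n) (h : y (k + 1) < y k) :
    dem (dem (tD k) y) (tD k) = y := by
  rw [hD.tD_dem_of_gt hy hk hkn (by rwa [hyinv]), hD.dem_tD_of_gt hy hk hkn h]

lemma conj_mul_tD (hD : IsDemazureProduct n dem) {v : Perm ℤ} (hv : v ∈ Dgrp n) (hk : k ≠ 0)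
    (hkn : k + 1 ≤ n) (h : v k < v (k + 1)) (y : Perm ℤ) :
    dem (dem (v * tD k) y) (v * tD k)⁻¹ = dem (dem v (dem (dem (tD k) y) (tD k))) v⁻¹ := by
  have hinv : dem (tD k) v⁻¹ = (v * tD k)⁻¹ := by
    rw [hD.tD_dem_of_lt (inv_mem_Dgrp hv) hk hkn (by rwa [inv_inv]), mul_inv_rev, tD_inv]
  rw [← hinv, ← hD.dem_tD_of_lt hv hk hkn h]
  simp only [hD.assoc]

end IsDemazureProduct

section yfpf

lemma yfpf_succ (m : ℕ) : yfpf (m + 1) = if m % 2 = 1 then yfpf m * tD m else yfpf m := by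
  unfold yfpf
  rw [List.range_succ, List.filter_append]
  split_ifs with hm <;> simp [hm]

lemma yfpf_apply_of_pos (m : ℕ) {x : ℤ} (hx : 0 < x) :
    yfpf m x = if x % 2 = 1 ∧ x < m then x + 1 else if x % 2 = 0 ∧ x ≤ m then x - 1 else x := by
  induction m generalizing x with
  | zero =>
    simp only [yfpf, List.range_zero, List.filter_nil, List.map_nil, List.prod_nil,
      Perm.one_apply, CharP.cast_eq_zero]
    split_ifs <;> omega
  | succ m ih =>
    rw [yfpf_succ]
    by_cases hm : m % 2 = 1
    · rw [if_pos hm, Perm.mul_apply, tD_apply_of_pos (by omega) hx]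
      split_ifs <;> rw [ih (by omega)] <;> split_ifs <;> omega
    · rw [if_neg hm, ih hx]
      split_ifs <;> omega

lemma yfpf_neg (m : ℕ) (x : ℤ) : yfpf m (-x) = -yfpf m x :=
  prod_map_tD_neg _ x

lemma yfpf_mem_Dgrp (n : ℕ) : yfpf n ∈ Dgrp n := by
  refine ⟨yfpf_neg n, fun x hx => ?_, ?_⟩
  · rcases lt_abs.mp hx with hx | hx
    · rw [yfpf_apply_of_pos n (by omega)]
      split_ifs <;> omega
    · rw [← neg_neg x, yfpf_neg, yfpf_apply_of_pos n (by omega)]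
      split_ifs <;> omega
  · have : {x ∈ Icc (1 : ℤ) n | yfpf n x < 0} = ∅ := filter_eq_empty_iff.mpr fun x hx => by
      rw [mem_Icc] at hx
      rw [yfpf_apply_of_pos n (by omega)]
      split_ifs <;> omega
    simp [this]

lemma yfpf_inv (n : ℕ) : (yfpf n)⁻¹ = yfpf n := by
  refine inv_eq_of_mul_eq_one_right (Perm.ext fun x => ?_)
  have hpos : ∀ x : ℤ, 0 < x → yfpf n (yfpf n x) = x := fun x hx => by
    rw [yfpf_apply_of_pos n hx]
    split_ifs <;> rw [yfpf_apply_of_pos n (by omega)] <;> split_ifs <;> omega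
  rw [Perm.mul_apply, Perm.one_apply]
  rcases lt_trichotomy x 0 with hx | rfl | hx
  · rw [← neg_neg x, yfpf_neg, yfpf_neg, hpos (-x) (by omega)]
  · rw [apply_zero_of_mem_Dgrp (yfpf_mem_Dgrp n), apply_zero_of_mem_Dgrp (yfpf_mem_Dgrp n)]
  · exact hpos x hx

lemma yfpf_apply_of_odd {n : ℕ} {x : ℤ} (hx : 0 < x) (hodd : x % 2 = 1) (hxn : x < n) :
    yfpf n x = x + 1 := by
  rw [yfpf_apply_of_pos n hx, if_pos ⟨hodd, hxn⟩]

lemma yfpf_apply_add_one_lt {n k : ℕ} (hk : k % 2 = 1) (hkn : k < n) :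
    yfpf n (k + 1) < yfpf n k := by
  rw [yfpf_apply_of_pos n (by omega), yfpf_apply_of_pos n (by omega)]
  split_ifs <;> omega

end yfpf

lemma tD_apply_window {p : ℕ} (hp : p ≠ 0) :
    tD p (p : ℤ) = p + 1 ∧ tD p ((p : ℤ) + 1) = p ∧ tD p ((p : ℤ) + 2) = p + 2 ∧
      tD p ((p : ℤ) + 3) = p + 3 ∧
    tD (p + 1) (p : ℤ) = p ∧ tD (p + 1) ((p : ℤ) + 1) = p + 2 ∧
      tD (p + 1) ((p : ℤ) + 2) = p + 1 ∧ tD (p + 1) ((p : ℤ) + 3) = p + 3 ∧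
    tD (p + 2) (p : ℤ) = p ∧ tD (p + 2) ((p : ℤ) + 1) = p + 1 ∧
      tD (p + 2) ((p : ℤ) + 2) = p + 3 ∧ tD (p + 2) ((p : ℤ) + 3) = p + 2 := by
  refine ⟨?_, ?_, ?_, ?_, ?_, ?_, ?_, ?_, ?_, ?_, ?_, ?_⟩ <;>
    first
    | exact tD_apply_self (by omega)
    | exact tD_apply_add_one (by omega)
    | exact tD_apply_of_ne (by omega) (by omega) (by omega) (by omega)

section minimal

variable {n : ℕ} {dem : Perm ℤ → Perm ℤ → Perm ℤ} {y w : Perm ℤ}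

lemma apply_lt_apply_add_one_of_minimal (hD : IsDemazureProduct n dem) (hy : y ∈ Dgrp n)
    (hyinv : y⁻¹ = y) (hw : w ∈ Dgrp n)
    (hmin : ∀ v ∈ Dgrp n, dem (dem v y) v⁻¹ = dem (dem w y) w⁻¹ → lenD n w ≤ lenD n v)
    {k : ℕ} (hk : k ≠ 0) (hkn : k + 1 ≤ n) (hyk : y (k + 1) < y k) : w k < w (k + 1) := by
  by_contra! hle
  have hgt : w (k + 1) < w k := hle.lt_of_ne (w.injective.ne (by omega))
  have hv := mul_tD_mem_Dgrp (by omega) hw hkn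
  have hasc : (w * tD k) k < (w * tD k) (k + 1) := by
    rwa [mul_tD_apply_self hk, mul_tD_apply_add_one hk]
  have hconj := hD.conj_mul_tD hv hk hkn hasc y
  rw [mul_tD_mul_tD, hD.conj_tD_of_gt hy hyinv hk hkn hyk] at hconj
  have := hmin _ hv hconj.symm
  have := lenD_mul_tD_of_gt hw hk hkn hgt
  omega

lemma ascents_of_window {v : Perm ℤ} {p : ℕ} (hp : p ≠ 0) (h₀₁ : v p < v (p + 1))
    (h₀₂ : v p < v (p + 2)) (h₂₃ : v (p + 2) < v (p + 3)) :
    (v * tD (p + 2)) p < (v * tD (p + 2)) (p + 1) ∧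
      (v * tD (p + 2) * tD p) (p + 1) < (v * tD (p + 2) * tD p) (p + 2) ∧
      (v * tD p) (p + 1) < (v * tD p) (p + 2) := by
  obtain ⟨s₀, s₁, s₂, -, -, -, -, -, r₀, r₁, r₂, -⟩ := tD_apply_window hp
  simp only [Perm.mul_apply, s₁, s₂, r₀, r₁, r₂]
  exact ⟨h₀₁, h₀₂.trans h₂₃, h₀₂⟩

lemma lenD_mul_window {v : Perm ℤ} (hv : v ∈ Dgrp n) {p : ℕ} (hp : p ≠ 0) (hpn : p + 3 ≤ n)
    (h₀₁ : v p < v (p + 1)) (h₀₂ : v p < v (p + 2)) (h₂₃ : v (p + 2) < v (p + 3)) :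
    lenD n (v * tD (p + 2) * tD p * tD (p + 1)) = lenD n (v * tD p * tD (p + 1)) + 1 := by
  obtain ⟨a₁, a₂, a₃⟩ := ascents_of_window hp h₀₁ h₀₂ h₂₃
  have hv₁ := mul_tD_mem_Dgrp (by omega) hv (k := p + 2) (by omega)
  rw [lenD_mul_tD_of_lt (mul_tD_mem_Dgrp (by omega) hv₁ (by omega)) p.succ_ne_zero (by omega) a₂,
    lenD_mul_tD_of_lt hv₁ hp (by omega) a₁, lenD_mul_tD_of_lt hv (by omega) (by omega) h₂₃,
    lenD_mul_tD_of_lt (mul_tD_mem_Dgrp (by omega) hv (by omega)) p.succ_ne_zero (by omega) a₃,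
    lenD_mul_tD_of_lt hv hp (by omega) h₀₁]

lemma conj_mul_window (hD : IsDemazureProduct n dem) (hy : y ∈ Dgrp n) (hyinv : y⁻¹ = y)
    {p : ℕ} (hp : p ≠ 0) (hpn : p + 3 ≤ n) (hy₀ : y p = p + 1) (hy₂ : y (p + 2) = p + 3)
    {v : Perm ℤ} (hv : v ∈ Dgrp n) (h₀₁ : v p < v (p + 1)) (h₀₂ : v p < v (p + 2))
    (h₂₃ : v (p + 2) < v (p + 3)) :
    dem (dem (v * tD (p + 2) * tD p * tD (p + 1)) y) (v * tD (p + 2) * tD p * tD (p + 1))⁻¹ =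
      dem (dem (v * tD p * tD (p + 1)) y) (v * tD p * tD (p + 1))⁻¹ := by
  have hp₁ : p + 1 ≠ 0 := p.succ_ne_zero
  have hp₂ : p + 2 ≠ 0 := (p + 1).succ_ne_zero
  have hpn₀ : p + 1 ≤ n := by omega
  have hpn₁ : p + 1 + 1 ≤ n := by omega
  have hpn₂ : p + 2 + 1 ≤ n := by omega
  have hn : 2 ≤ n := by omega
  obtain ⟨a₁, a₂, a₃⟩ := ascents_of_window hp h₀₁ h₀₂ h₂₃
  obtain ⟨s₀, s₁, s₂, s₃, t₀, t₁, t₂, t₃, -, -, -, -⟩ := tD_apply_window hp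
  have hy₁ : y ((p : ℤ) + 1) = p := by rw [← hyinv, Perm.inv_eq_iff_eq, hy₀]
  have hy₃ : y ((p : ℤ) + 3) = p + 2 := by rw [← hyinv, Perm.inv_eq_iff_eq, hy₂]
  set y₂ := tD (p + 1) * y * tD (p + 1)
  set y₃ := tD p * y₂ * tD p
  have hy₂D : y₂ ∈ Dgrp n := mul_tD_mem_Dgrp hn (tD_mul_mem_Dgrp hn hy hpn₁) hpn₁
  have hy₃D : y₃ ∈ Dgrp n := mul_tD_mem_Dgrp hn (tD_mul_mem_Dgrp hn hy₂D hpn₀) hpn₀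
  have hy₂inv : y₂⁻¹ = y₂ := by simp only [y₂, mul_inv_rev, tD_inv, hyinv, mul_assoc]
  have hy₃inv : y₃⁻¹ = y₃ := by simp only [y₃, mul_inv_rev, tD_inv, hy₂inv, mul_assoc]
  have c₁ : dem (dem (tD (p + 1)) y) (tD (p + 1)) = y₂ :=
    hD.conj_tD_of_lt hy hyinv hp₁ hpn₁
      (show y ((p : ℤ) + 1) < y ((p : ℤ) + 2) by rw [hy₁, hy₂]; linarith)
      (show (tD (p + 1) * y) ((p : ℤ) + 1) < (tD (p + 1) * y) ((p : ℤ) + 2) by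
        simp only [Perm.mul_apply, hy₁, hy₂, t₀, t₃]; linarith)
  have c₂ : dem (dem (tD p) y₂) (tD p) = y₃ :=
    hD.conj_tD_of_lt hy₂D hy₂inv hp hpn₀
      (show y₂ p < y₂ ((p : ℤ) + 1) by
        simp only [y₂, Perm.mul_apply, t₀, t₁, hy₀, hy₂, t₃]; linarith)
      (show (tD p * y₂) p < (tD p * y₂) ((p : ℤ) + 1) by
        simp only [y₂, Perm.mul_apply, t₀, t₁, hy₀, hy₂, t₃, s₂, s₃]; linarith)
  have c₃ : dem (dem (tD (p + 2)) y₃) (tD (p + 2)) = y₃ :=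
    hD.conj_tD_of_gt hy₃D hy₃inv hp₂ hpn₂
      (show y₃ ((p : ℤ) + 3) < y₃ ((p : ℤ) + 2) by
        simp only [y₃, y₂, Perm.mul_apply, s₂, s₃, t₂, t₃, hy₁, hy₃, t₀, s₀, s₁]; linarith)
  have hv₁ := mul_tD_mem_Dgrp hn hv hpn₂
  rw [hD.conj_mul_tD (mul_tD_mem_Dgrp hn hv₁ hpn₀) hp₁ hpn₁ a₂, c₁,
    hD.conj_mul_tD hv₁ hp hpn₀ a₁, c₂, hD.conj_mul_tD hv hp₂ hpn₂ h₂₃, c₃,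
    hD.conj_mul_tD (mul_tD_mem_Dgrp hn hv hpn₀) hp₁ hpn₁ a₃, c₁, hD.conj_mul_tD hv hp hpn₀ h₀₁, c₂]

lemma apply_lt_apply_add_two_of_minimal (hD : IsDemazureProduct n dem) (hy : y ∈ Dgrp n)
    (hyinv : y⁻¹ = y) (hw : w ∈ Dgrp n)
    (hmin : ∀ v ∈ Dgrp n, dem (dem v y) v⁻¹ = dem (dem w y) w⁻¹ → lenD n w ≤ lenD n v)
    {p : ℕ} (hp : p ≠ 0) (hpn : p + 3 ≤ n) (hy₀ : y p = p + 1) (hy₂ : y (p + 2) = p + 3)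
    (h₂₃ : w (p + 2) < w (p + 3)) (h₃₁ : w (p + 3) < w (p + 1)) : w p < w (p + 2) := by
  by_contra! hle
  have h₂₀ : w (p + 2) < w p := hle.lt_of_ne (w.injective.ne (by omega))
  have hn : 2 ≤ n := by omega
  have hpn₀ : p + 1 ≤ n := by omega
  have hpn₁ : p + 1 + 1 ≤ n := by omega
  have hpn₂ : p + 2 + 1 ≤ n := by omega
  set v := w * tD (p + 1) * tD p * tD (p + 2)
  have hv : v ∈ Dgrp n :=
    mul_tD_mem_Dgrp hn (mul_tD_mem_Dgrp hn (mul_tD_mem_Dgrp hn hw hpn₁) hpn₀) hpn₂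
  have hu : v * tD p * tD (p + 1) ∈ Dgrp n := mul_tD_mem_Dgrp hn (mul_tD_mem_Dgrp hn hv hpn₀) hpn₁
  have hwv : v * tD (p + 2) * tD p * tD (p + 1) = w := by simp only [v, mul_tD_mul_tD]
  obtain ⟨s₀, s₁, s₂, s₃, t₀, t₁, t₂, t₃, r₀, r₁, r₂, r₃⟩ := tD_apply_window hp
  have hv₀₁ : v p < v (p + 1) := by
    simp only [v, Perm.mul_apply, r₀, s₀, t₁, r₁, s₁, t₀]; exact h₂₀
  have hv₀₂ : v p < v (p + 2) := by
    simp only [v, Perm.mul_apply, r₀, s₀, t₁, r₂, s₃, t₃]; exact h₂₃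
  have hv₂₃ : v (p + 2) < v (p + 3) := by
    simp only [v, Perm.mul_apply, r₂, s₃, t₃, r₃, s₂, t₂]; exact h₃₁
  have hlen := lenD_mul_window hv hp hpn hv₀₁ hv₀₂ hv₂₃
  have := hmin _ hu (by rw [← conj_mul_window hD hy hyinv hp hpn hy₀ hy₂ hv hv₀₁ hv₀₂ hv₂₃, hwv])
  rw [hwv] at hlen
  rw [hlen] at this
  simp at this

end minimal

theorem stmt19_general (n : ℕ)
    (dem : Equiv.Perm ℤ → Equiv.Perm ℤ → Equiv.Perm ℤ)
    (hassoc : ∀ u v w, dem (dem u v) w = dem u (dem v w))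
    (hright : ∀ w ∈ Dgrp n, ∀ i : ℕ, i < n →
      dem w (tD i) = if lenD n (w * tD i) = lenD n w + 1 then w * tD i else w)
    (hleft : ∀ w ∈ Dgrp n, ∀ i : ℕ, i < n →
      dem (tD i) w = if lenD n (tD i * w) = lenD n w + 1 then tD i * w else w)
    (z : Equiv.Perm ℤ)
    (w : Equiv.Perm ℤ) (hw : w ∈ Dgrp n)
    (hwz : dem (dem w (yfpf n)) w⁻¹ = z)
    (hmin : ∀ v ∈ Dgrp n, dem (dem v (yfpf n)) v⁻¹ = z → lenD n w ≤ lenD n v)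
    (i : ℤ) (hi1 : 1 ≤ i) (hin : i ≤ (n : ℤ) - 3) (hodd : Odd i)
    (hdesc : w (i + 3) < w (i + 1)) :
    ∃ A B C D : ℤ, A < B ∧ B < C ∧ C < D ∧
      w i = A ∧ w (i + 1) = D ∧ w (i + 2) = B ∧ w (i + 3) = C := by
  have hD : IsDemazureProduct n dem := ⟨hassoc, hright, hleft⟩
  subst hwz
  lift i to ℕ using (by omega)
  have hi : i % 2 = 1 := by
    obtain ⟨m, hm⟩ := hodd
    omega
  have hBC : w ((i : ℤ) + 2) < w ((i : ℤ) + 3) :=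
    apply_lt_apply_add_one_of_minimal hD (yfpf_mem_Dgrp n) (yfpf_inv n) hw hmin (k := i + 2)
      (by omega) (by omega) (yfpf_apply_add_one_lt (by omega) (by omega))
  have hAB := apply_lt_apply_add_two_of_minimal hD (yfpf_mem_Dgrp n) (yfpf_inv n) hw hmin
    (by omega) (by omega) (yfpf_apply_of_odd (by omega) (by omega) (by omega))
    (by rw [yfpf_apply_of_odd (by omega) (by omega) (by omega)]; ring) hBC hdesc
  exact ⟨_, _, _, _, hAB, hBC, hdesc, rfl, rfl, rfl, rfl⟩

/-- Let `n` be even, `z ∈ W⁺_n` a fixed-point-free involution, and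
`w` a minimal-length element of `W⁺_n` with `w ∘ y ∘ w⁻¹ = z` for
`y = t₁t₃⋯t_{n−1}` (Demazure product).  If `i ∈ [n−3]` is odd and
`w_{i+1} > w_{i+3}`, then `w_i w_{i+1} w_{i+2} w_{i+3} = A, D, B, C` for some
integers `A < B < C < D`. -/
theorem stmt19 (n : ℕ) (hn : Even n)
    (dem : Equiv.Perm ℤ → Equiv.Perm ℤ → Equiv.Perm ℤ)
    (hassoc : ∀ u v w, dem (dem u v) w = dem u (dem v w))
    (hone : ∀ w, dem w 1 = w ∧ dem 1 w = w)
    (hright : ∀ w ∈ Dgrp n, ∀ i : ℕ, i < n →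
      dem w (tD i) = if lenD n (w * tD i) = lenD n w + 1 then w * tD i else w)
    (hleft : ∀ w ∈ Dgrp n, ∀ i : ℕ, i < n →
      dem (tD i) w = if lenD n (tD i * w) = lenD n w + 1 then tD i * w else w)
    (z : Equiv.Perm ℤ) (hz : z ∈ Dgrp n) (hzi : z⁻¹ = z)
    (hfpf : ∀ i : ℤ, 1 ≤ i → i ≤ (n : ℤ) → z i ≠ i)
    (w : Equiv.Perm ℤ) (hw : w ∈ Dgrp n)
    (hwz : dem (dem w (yfpf n)) w⁻¹ = z)
    (hmin : ∀ v ∈ Dgrp n, dem (dem v (yfpf n)) v⁻¹ = z → lenD n w ≤ lenD n v)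
    (i : ℤ) (hi1 : 1 ≤ i) (hin : i ≤ (n : ℤ) - 3) (hodd : Odd i)
    (hdesc : w (i + 3) < w (i + 1)) :
    ∃ A B C D : ℤ, A < B ∧ B < C ∧ C < D ∧
      w i = A ∧ w (i + 1) = D ∧ w (i + 2) = B ∧ w (i + 3) = C :=
  stmt19_general n dem hassoc hright hleft z w hw hwz hmin i hi1 hin hodd hdesc
end
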